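/- arXiv:2105.09375 — 8 statements merged into one kernel-verified Lean document; each statement's English description precedes it below -/
import Mathlib

section
/- In the two-bidder click-through auction, for every calibrated and independent information structure x for a prior g, the expected revenue satisfies Rev(x) ≤ min(v1·∑_r g(r)·r1, v2·∑_r g(r)·r2); that is, no calibrated independent information structure yields more expected revenue than the no-disclosure structure. -/
open scoped Classical

noncomputable section

/-- A CTR pair lies in the unit square. -/
def InUnitSq (r : ℝ × ℝ) : Prop := 0 ≤ r.1 ∧ r.1 ≤ 1 ∧ 0 ≤ r.2 ∧ r.2 ≤ 1

/-- A finitely supported probability mass function on CTR pairs in [0,1]². -/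
def IsPrior (g : ℝ × ℝ → ℝ) : Prop :=
  (Function.support g).Finite ∧ (∀ r, 0 ≤ g r) ∧
  (∀ r, g r ≠ 0 → InUnitSq r) ∧ (∑ᶠ r, g r) = 1

/-- An information structure for the prior `g`: finitely supported, nonnegative,
signals in [0,1]², with `r`-marginal equal to `g`. -/
def IsInfoStructure (g : ℝ × ℝ → ℝ) (x : (ℝ × ℝ) × (ℝ × ℝ) → ℝ) : Prop :=
  (Function.support x).Finite ∧ (∀ p, 0 ≤ x p) ∧
  (∀ p, x p ≠ 0 → InUnitSq p.2) ∧ (∀ r, (∑ᶠ s, x (r, s)) = g r)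

/-- Calibration: the posterior mean of `rᵢ` given any signal value `c` of bidder `i`
equals `c`. -/
def Calibrated (x : (ℝ × ℝ) × (ℝ × ℝ) → ℝ) : Prop :=
  ∀ c : ℝ, 0 ≤ c → c ≤ 1 →
    (∑ᶠ p : (ℝ × ℝ) × (ℝ × ℝ), if p.2.1 = c then x p * (p.1.1 - c) else 0) = 0 ∧
    (∑ᶠ p : (ℝ × ℝ) × (ℝ × ℝ), if p.2.2 = c then x p * (p.1.2 - c) else 0) = 0

/-- Independence: for each bidder `i` and each signal pair `s0` with positive
probability, the conditional mean of `rᵢ` given the full signal pair equals the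
conditional mean of `rᵢ` given `sᵢ` alone (stated in cross-multiplied form). -/
def Independent (x : (ℝ × ℝ) × (ℝ × ℝ) → ℝ) : Prop :=
  ∀ s0 : ℝ × ℝ, 0 < (∑ᶠ r, x (r, s0)) →
    ((∑ᶠ r, x (r, s0) * r.1) *
        (∑ᶠ p : (ℝ × ℝ) × (ℝ × ℝ), if p.2.1 = s0.1 then x p else 0)
      = (∑ᶠ p : (ℝ × ℝ) × (ℝ × ℝ), if p.2.1 = s0.1 then x p * p.1.1 else 0) *
        (∑ᶠ r, x (r, s0))) ∧
    ((∑ᶠ r, x (r, s0) * r.2) *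
        (∑ᶠ p : (ℝ × ℝ) × (ℝ × ℝ), if p.2.2 = s0.2 then x p else 0)
      = (∑ᶠ p : (ℝ × ℝ) × (ℝ × ℝ), if p.2.2 = s0.2 then x p * p.1.2 else 0) *
        (∑ᶠ r, x (r, s0)))

/-- Expected payment of the click-through auction given CTRs `r` and signals `s`,
with uniform tie-breaking (division by zero is zero in Lean, matching t/0 = 0). -/
def pay (v1 v2 : ℝ) (r s : ℝ × ℝ) : ℝ :=
  if v2 * s.2 < v1 * s.1 then r.1 * (v2 * s.2 / s.1)
  else if v1 * s.1 < v2 * s.2 then r.2 * (v1 * s.1 / s.2)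
  else (r.1 * (v2 * s.2 / s.1) + r.2 * (v1 * s.1 / s.2)) / 2

/-- Expected revenue of an information structure. -/
def Rev (v1 v2 : ℝ) (x : (ℝ × ℝ) × (ℝ × ℝ) → ℝ) : ℝ :=
  ∑ᶠ p : (ℝ × ℝ) × (ℝ × ℝ), x p * pay v1 v2 p.1 p.2

/-- Revenue of the no-disclosure information structure. -/
def noDisclosureRev (v1 v2 : ℝ) (g : ℝ × ℝ → ℝ) : ℝ :=
  min (v1 * ∑ᶠ r : ℝ × ℝ, g r * r.1) (v2 * ∑ᶠ r : ℝ × ℝ, g r * r.2)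

/-- Revenue of the full-disclosure information structure. -/
def fullDisclosureRev (v1 v2 : ℝ) (g : ℝ × ℝ → ℝ) : ℝ :=
  ∑ᶠ r : ℝ × ℝ, g r * min (v1 * r.1) (v2 * r.2)

/-- no calibrated independent information structure yields more
expected revenue than the no-disclosure structure. -/
theorem independent_calibrated_revenue_le_noDisclosure
    (v1 v2 : ℝ) (hv1 : 0 ≤ v1) (hv2 : 0 ≤ v2)
    (g : ℝ × ℝ → ℝ) (hg : IsPrior g)
    (x : (ℝ × ℝ) × (ℝ × ℝ) → ℝ) (hx : IsInfoStructure g x)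
    (hcal : Calibrated x) (hind : Independent x) :
    Rev v1 v2 x ≤ noDisclosureRev v1 v2 g := by
  classical
  obtain ⟨hfin, hpos, hsq, hmarg⟩ := hx
  set S : Finset ((ℝ×ℝ)×(ℝ×ℝ)) := hfin.toFinset with hSdef
  set T : Finset (ℝ×ℝ) := S.image Prod.fst with hTdef
  set U : Finset (ℝ×ℝ) := S.image Prod.snd with hUdef
  have hmemS : ∀ p, x p ≠ 0 → p ∈ S := fun p hp => hfin.mem_toFinset.mpr hp
  have hmemT : ∀ r s, x (r, s) ≠ 0 → r ∈ T := fun r s h =>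
    Finset.mem_image.mpr ⟨(r, s), hmemS _ h, rfl⟩
  have hmemU : ∀ r s, x (r, s) ≠ 0 → s ∈ U := fun r s h =>
    Finset.mem_image.mpr ⟨(r, s), hmemS _ h, rfl⟩
  -- any finsum over pairs whose summand vanishes where x vanishes is a sum over T ×ˢ U
  have hsumP : ∀ F : (ℝ×ℝ)×(ℝ×ℝ) → ℝ, (∀ p, x p = 0 → F p = 0) →
      (∑ᶠ p, F p) = ∑ p ∈ T ×ˢ U, F p := by
    intro F hF
    refine finsum_eq_finset_sum_of_support_subset F ?_
    intro p hp
    simp only [Function.mem_support] at hp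
    have hxp : x p ≠ 0 := fun h => hp (hF p h)
    exact Finset.mem_coe.mpr (Finset.mem_product.mpr
      ⟨hmemT p.1 p.2 hxp, hmemU p.1 p.2 hxp⟩)
  -- finsums over r reduce to sums over T
  have hsumR : ∀ (s0 : ℝ×ℝ) (f : ℝ×ℝ → ℝ),
      (∑ᶠ r, x (r, s0) * f r) = ∑ r ∈ T, x (r, s0) * f r := by
    intro s0 f
    refine finsum_eq_finset_sum_of_support_subset _ ?_
    intro r hr
    simp only [Function.mem_support] at hr
    have : x (r, s0) ≠ 0 := fun h => hr (by rw [h, zero_mul])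
    exact Finset.mem_coe.mpr (hmemT r s0 this)
  have hsumR' : ∀ s0 : ℝ×ℝ, (∑ᶠ r, x (r, s0)) = ∑ r ∈ T, x (r, s0) := by
    intro s0
    refine finsum_eq_finset_sum_of_support_subset _ ?_
    intro r hr
    simp only [Function.mem_support] at hr
    exact Finset.mem_coe.mpr (hmemT r s0 hr)
  set m : ℝ×ℝ → ℝ := fun s => ∑ r ∈ T, x (r, s) with hmdef
  have hmnn : ∀ s0, 0 ≤ m s0 := fun s0 => Finset.sum_nonneg fun r _ => hpos _
  have hm0 : ∀ s0, m s0 = 0 → ∀ r ∈ T, x (r, s0) = 0 := fun s0 h =>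
    (Finset.sum_eq_zero_iff_of_nonneg (fun r _ => hpos _)).mp h
  have hUsq : ∀ s0 ∈ U, InUnitSq s0 := by
    intro s0 hs0
    obtain ⟨p, hpS, hps⟩ := Finset.mem_image.mp hs0
    have : x p ≠ 0 := hfin.mem_toFinset.mp hpS
    simpa [hps] using hsq p this
  -- conditional mean: E[r_i | s] = s_i
  have hcond : ∀ s0 ∈ U, 0 < m s0 →
      (∑ r ∈ T, x (r, s0) * r.1) = s0.1 * m s0 ∧
      (∑ r ∈ T, x (r, s0) * r.2) = s0.2 * m s0 := by
    intro s0 hs0U hmpos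
    obtain ⟨hq1, hq2, hq3, hq4⟩ := hUsq s0 hs0U
    have hMpos : 0 < (∑ᶠ r, x (r, s0)) := by rw [hsumR']; exact hmpos
    obtain ⟨hi1, hi2⟩ := hind s0 hMpos
    have eB1 : (∑ᶠ p : (ℝ×ℝ)×(ℝ×ℝ), if p.2.1 = s0.1 then x p else 0)
        = ∑ p ∈ T ×ˢ U, if p.2.1 = s0.1 then x p else 0 :=
      hsumP (fun p => if p.2.1 = s0.1 then x p else 0) (fun p h => by simp [h])
    have eC1 : (∑ᶠ p : (ℝ×ℝ)×(ℝ×ℝ), if p.2.1 = s0.1 then x p * p.1.1 else 0)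
        = ∑ p ∈ T ×ˢ U, if p.2.1 = s0.1 then x p * p.1.1 else 0 :=
      hsumP (fun p => if p.2.1 = s0.1 then x p * p.1.1 else 0) (fun p h => by simp [h])
    have eB2 : (∑ᶠ p : (ℝ×ℝ)×(ℝ×ℝ), if p.2.2 = s0.2 then x p else 0)
        = ∑ p ∈ T ×ˢ U, if p.2.2 = s0.2 then x p else 0 :=
      hsumP (fun p => if p.2.2 = s0.2 then x p else 0) (fun p h => by simp [h])
    have eC2 : (∑ᶠ p : (ℝ×ℝ)×(ℝ×ℝ), if p.2.2 = s0.2 then x p * p.1.2 else 0)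
        = ∑ p ∈ T ×ˢ U, if p.2.2 = s0.2 then x p * p.1.2 else 0 :=
      hsumP (fun p => if p.2.2 = s0.2 then x p * p.1.2 else 0) (fun p h => by simp [h])
    rw [hsumR s0 (fun r => r.1), hsumR', eB1, eC1] at hi1
    rw [hsumR s0 (fun r => r.2), hsumR', eB2, eC2] at hi2
    constructor
    · -- bidder 1
      have hcal1 := (hcal s0.1 hq1 hq2).1
      rw [hsumP (fun p => if p.2.1 = s0.1 then x p * (p.1.1 - s0.1) else 0)
        (fun p h => by simp [h])] at hcal1
      have hCB : (∑ p ∈ T ×ˢ U, if p.2.1 = s0.1 then x p * p.1.1 else 0)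
          = s0.1 * (∑ p ∈ T ×ˢ U, if p.2.1 = s0.1 then x p else 0) := by
        have key : (∑ p ∈ T ×ˢ U, if p.2.1 = s0.1 then x p * p.1.1 else 0)
            - s0.1 * (∑ p ∈ T ×ˢ U, if p.2.1 = s0.1 then x p else 0)
            = ∑ p ∈ T ×ˢ U, (if p.2.1 = s0.1 then x p * (p.1.1 - s0.1) else 0) := by
          rw [Finset.mul_sum, ← Finset.sum_sub_distrib]
          refine Finset.sum_congr rfl fun p _ => ?_
          by_cases hc : p.2.1 = s0.1 <;> simp [hc] <;> ring
        linarith [key, hcal1]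
      have hBpos : 0 < (∑ p ∈ T ×ˢ U, if p.2.1 = s0.1 then x p else 0) := by
        have hge : m s0 ≤ ∑ p ∈ T ×ˢ U, if p.2.1 = s0.1 then x p else 0 := by
          rw [Finset.sum_product]
          refine Finset.sum_le_sum fun r hr => ?_
          have key := Finset.single_le_sum
            (f := fun s : ℝ×ℝ => if s.1 = s0.1 then x (r, s) else 0)
            (s := U)
            (fun s _ => by by_cases hc : s.1 = s0.1 <;> simp [hc, hpos]) hs0U
          simpa using key
        linarith
      have hkey : (∑ r ∈ T, x (r, s0) * r.1)
            * (∑ p ∈ T ×ˢ U, if p.2.1 = s0.1 then x p else 0)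
          = (s0.1 * ∑ r ∈ T, x (r, s0))
            * (∑ p ∈ T ×ˢ U, if p.2.1 = s0.1 then x p else 0) := by
        rw [hi1, hCB]; ring
      exact mul_right_cancel₀ (ne_of_gt hBpos) hkey
    · -- bidder 2
      have hcal2 := (hcal s0.2 hq3 hq4).2
      rw [hsumP (fun p => if p.2.2 = s0.2 then x p * (p.1.2 - s0.2) else 0)
        (fun p h => by simp [h])] at hcal2
      have hCB : (∑ p ∈ T ×ˢ U, if p.2.2 = s0.2 then x p * p.1.2 else 0)
          = s0.2 * (∑ p ∈ T ×ˢ U, if p.2.2 = s0.2 then x p else 0) := by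
        have key : (∑ p ∈ T ×ˢ U, if p.2.2 = s0.2 then x p * p.1.2 else 0)
            - s0.2 * (∑ p ∈ T ×ˢ U, if p.2.2 = s0.2 then x p else 0)
            = ∑ p ∈ T ×ˢ U, (if p.2.2 = s0.2 then x p * (p.1.2 - s0.2) else 0) := by
          rw [Finset.mul_sum, ← Finset.sum_sub_distrib]
          refine Finset.sum_congr rfl fun p _ => ?_
          by_cases hc : p.2.2 = s0.2 <;> simp [hc] <;> ring
        linarith [key, hcal2]
      have hBpos : 0 < (∑ p ∈ T ×ˢ U, if p.2.2 = s0.2 then x p else 0) := by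
        have hge : m s0 ≤ ∑ p ∈ T ×ˢ U, if p.2.2 = s0.2 then x p else 0 := by
          rw [Finset.sum_product]
          refine Finset.sum_le_sum fun r hr => ?_
          have key := Finset.single_le_sum
            (f := fun s : ℝ×ℝ => if s.2 = s0.2 then x (r, s) else 0)
            (s := U)
            (fun s _ => by by_cases hc : s.2 = s0.2 <;> simp [hc, hpos]) hs0U
          simpa using key
        linarith
      have hkey : (∑ r ∈ T, x (r, s0) * r.2)
            * (∑ p ∈ T ×ˢ U, if p.2.2 = s0.2 then x p else 0)
          = (s0.2 * ∑ r ∈ T, x (r, s0))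
            * (∑ p ∈ T ×ˢ U, if p.2.2 = s0.2 then x p else 0) := by
        rw [hi2, hCB]; ring
      exact mul_right_cancel₀ (ne_of_gt hBpos) hkey
  -- per-signal revenue
  have hrev_s : ∀ s0 ∈ U, (∑ r ∈ T, x (r, s0) * pay v1 v2 r s0)
      = m s0 * min (v1 * s0.1) (v2 * s0.2) := by
    intro s0 hs0U
    obtain ⟨hq1, hq2, hq3, hq4⟩ := hUsq s0 hs0U
    rcases eq_or_lt_of_le (hmnn s0) with hm | hm
    · rw [Finset.sum_eq_zero fun r hr => by rw [hm0 s0 hm.symm r hr, zero_mul],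
        ← hm, zero_mul]
    · obtain ⟨hA1, hA2⟩ := hcond s0 hs0U hm
      have hv1s : 0 ≤ v1 * s0.1 := mul_nonneg hv1 hq1
      have hv2s : 0 ≤ v2 * s0.2 := mul_nonneg hv2 hq3
      rcases lt_trichotomy (v2 * s0.2) (v1 * s0.1) with h | h | h
      · have hs1 : s0.1 ≠ 0 := by
          intro h0; rw [h0, mul_zero] at h; linarith
        have hp : ∀ r : ℝ×ℝ, pay v1 v2 r s0 = r.1 * (v2 * s0.2 / s0.1) :=
          fun r => if_pos h
        have e1 : s0.1 * (v2 * s0.2 / s0.1) = v2 * s0.2 := by field_simp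
        calc (∑ r ∈ T, x (r, s0) * pay v1 v2 r s0)
            = (∑ r ∈ T, x (r, s0) * r.1) * (v2 * s0.2 / s0.1) := by
              rw [Finset.sum_mul]
              exact Finset.sum_congr rfl fun r _ => by rw [hp r]; ring
          _ = m s0 * min (v1 * s0.1) (v2 * s0.2) := by
              rw [hA1, min_eq_right h.le, mul_comm s0.1 (m s0), mul_assoc, e1]
      · -- tie
        have hp : ∀ r : ℝ×ℝ, pay v1 v2 r s0
            = (r.1 * (v2 * s0.2 / s0.1) + r.2 * (v1 * s0.1 / s0.2)) / 2 := by
          intro r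
          unfold pay
          rw [if_neg (not_lt.mpr h.ge), if_neg (not_lt.mpr h.le)]
        have e1 : s0.1 * (v2 * s0.2 / s0.1) = v2 * s0.2 := by
          rcases eq_or_ne s0.1 0 with h0 | h0
          · rw [h0] at h ⊢
            rw [mul_zero] at h
            rw [h]; simp
          · field_simp
        have e2 : s0.2 * (v1 * s0.1 / s0.2) = v1 * s0.1 := by
          rcases eq_or_ne s0.2 0 with h0 | h0
          · rw [h0] at h ⊢
            rw [mul_zero] at h
            rw [← h]; simp
          · field_simp
        calc (∑ r ∈ T, x (r, s0) * pay v1 v2 r s0)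
            = ((∑ r ∈ T, x (r, s0) * r.1) * (v2 * s0.2 / s0.1)
              + (∑ r ∈ T, x (r, s0) * r.2) * (v1 * s0.1 / s0.2)) / 2 := by
              rw [Finset.sum_mul, Finset.sum_mul, ← Finset.sum_add_distrib,
                Finset.sum_div]
              exact Finset.sum_congr rfl fun r _ => by rw [hp r]; ring
          _ = m s0 * min (v1 * s0.1) (v2 * s0.2) := by
              rw [hA1, hA2, min_eq_left h.ge,
                mul_comm s0.1 (m s0), mul_assoc, e1,
                mul_comm s0.2 (m s0), mul_assoc, e2, ← h]
              ring
      · have hs2 : s0.2 ≠ 0 := by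
          intro h0; rw [h0, mul_zero] at h; linarith
        have hp : ∀ r : ℝ×ℝ, pay v1 v2 r s0 = r.2 * (v1 * s0.1 / s0.2) := by
          intro r; unfold pay
          rw [if_neg (asymm h), if_pos h]
        have e2 : s0.2 * (v1 * s0.1 / s0.2) = v1 * s0.1 := by field_simp
        calc (∑ r ∈ T, x (r, s0) * pay v1 v2 r s0)
            = (∑ r ∈ T, x (r, s0) * r.2) * (v1 * s0.1 / s0.2) := by
              rw [Finset.sum_mul]
              exact Finset.sum_congr rfl fun r _ => by rw [hp r]; ring
          _ = m s0 * min (v1 * s0.1) (v2 * s0.2) := by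
              rw [hA2, min_eq_left h.le, mul_comm s0.2 (m s0), mul_assoc, e2]
  -- revenue formula
  have hRev : Rev v1 v2 x = ∑ s0 ∈ U, m s0 * min (v1 * s0.1) (v2 * s0.2) := by
    unfold Rev
    rw [hsumP (fun p => x p * pay v1 v2 p.1 p.2) (fun p h => by simp [h]),
      Finset.sum_product, Finset.sum_comm]
    exact Finset.sum_congr rfl fun s0 hs0 => hrev_s s0 hs0
  -- marginals
  have hmargT : ∀ f : ℝ×ℝ → ℝ,
      (∑ᶠ r, g r * f r) = ∑ r ∈ T, g r * f r := by
    intro f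
    refine finsum_eq_finset_sum_of_support_subset _ ?_
    intro r hr
    simp only [Function.mem_support] at hr
    have hgr : g r ≠ 0 := fun h => hr (by rw [h, zero_mul])
    rw [← hmarg r] at hgr
    have : ∃ s, x (r, s) ≠ 0 := by
      by_contra hc
      push_neg at hc
      exact hgr (finsum_eq_zero_of_forall_eq_zero hc)
    obtain ⟨s, hs⟩ := this
    exact Finset.mem_coe.mpr (hmemT r s hs)
  have hgU : ∀ r : ℝ×ℝ, g r = ∑ s ∈ U, x (r, s) := by
    intro r
    rw [← hmarg r]
    refine finsum_eq_finset_sum_of_support_subset _ ?_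
    intro s hs
    simp only [Function.mem_support] at hs
    exact Finset.mem_coe.mpr (hmemU r s hs)
  have hmarg1 : (∑ s0 ∈ U, s0.1 * m s0) = ∑ᶠ r, g r * r.1 := by
    rw [hmargT]
    calc (∑ s0 ∈ U, s0.1 * m s0) = ∑ s0 ∈ U, ∑ r ∈ T, x (r, s0) * r.1 := by
          refine Finset.sum_congr rfl fun s0 hs0 => ?_
          rcases eq_or_lt_of_le (hmnn s0) with hm | hm
          · rw [← hm, mul_zero,
              Finset.sum_eq_zero fun r hr => by rw [hm0 s0 hm.symm r hr, zero_mul]]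
          · rw [(hcond s0 hs0 hm).1]
      _ = ∑ r ∈ T, ∑ s0 ∈ U, x (r, s0) * r.1 := Finset.sum_comm
      _ = ∑ r ∈ T, g r * r.1 := by
          refine Finset.sum_congr rfl fun r _ => ?_
          rw [hgU r, Finset.sum_mul]
  have hmarg2 : (∑ s0 ∈ U, s0.2 * m s0) = ∑ᶠ r, g r * r.2 := by
    rw [hmargT]
    calc (∑ s0 ∈ U, s0.2 * m s0) = ∑ s0 ∈ U, ∑ r ∈ T, x (r, s0) * r.2 := by
          refine Finset.sum_congr rfl fun s0 hs0 => ?_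
          rcases eq_or_lt_of_le (hmnn s0) with hm | hm
          · rw [← hm, mul_zero,
              Finset.sum_eq_zero fun r hr => by rw [hm0 s0 hm.symm r hr, zero_mul]]
          · rw [(hcond s0 hs0 hm).2]
      _ = ∑ r ∈ T, ∑ s0 ∈ U, x (r, s0) * r.2 := Finset.sum_comm
      _ = ∑ r ∈ T, g r * r.2 := by
          refine Finset.sum_congr rfl fun r _ => ?_
          rw [hgU r, Finset.sum_mul]
  -- final bound
  unfold noDisclosureRev
  refine le_min ?_ ?_
  · rw [hRev, ← hmarg1, Finset.mul_sum]
    refine Finset.sum_le_sum fun s0 _ => ?_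
    calc m s0 * min (v1 * s0.1) (v2 * s0.2) ≤ m s0 * (v1 * s0.1) :=
          mul_le_mul_of_nonneg_left (min_le_left _ _) (hmnn s0)
      _ = v1 * (s0.1 * m s0) := by ring
  · rw [hRev, ← hmarg2, Finset.mul_sum]
    refine Finset.sum_le_sum fun s0 _ => ?_
    calc m s0 * min (v1 * s0.1) (v2 * s0.2) ≤ m s0 * (v2 * s0.2) :=
          mul_le_mul_of_nonneg_left (min_le_right _ _) (hmnn s0)
      _ = v2 * (s0.2 * m s0) := by ring
end
end

section
/- In the two-bidder click-through auction, for every calibrated and independent information structure x for a prior g, the expected revenue equals the expected minimum of the value-weighted signals: Rev(x) = ∑_{(r,s)} x(r,s)·min(v1·s1, v2·s2). -/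
open scoped Classical

noncomputable section

/-- for calibrated independent information structures, the expected
revenue equals the expected minimum of the value-weighted signals. -/
theorem independent_calibrated_revenue_eq_min_signals
    (v1 v2 : ℝ) (hv1 : 0 ≤ v1) (hv2 : 0 ≤ v2)
    (g : ℝ × ℝ → ℝ) (hg : IsPrior g)
    (x : (ℝ × ℝ) × (ℝ × ℝ) → ℝ) (hx : IsInfoStructure g x)
    (hcal : Calibrated x) (hind : Independent x) :
    Rev v1 v2 x = ∑ᶠ p : (ℝ × ℝ) × (ℝ × ℝ), x p * min (v1 * p.2.1) (v2 * p.2.2) := by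
  obtain ⟨hxfin, hxnn, hxsq, hxmarg⟩ := hx
  classical
  set S : Finset ((ℝ × ℝ) × (ℝ × ℝ)) := hxfin.toFinset with hSdef
  set T : Finset (ℝ × ℝ) := S.image Prod.fst with hTdef
  set U : Finset (ℝ × ℝ) := S.image Prod.snd with hUdef
  set P : Finset ((ℝ × ℝ) × (ℝ × ℝ)) := T ×ˢ U with hPdef
  have hmemS : ∀ p, x p ≠ 0 → p ∈ S := by
    intro p hp
    simp [hSdef, Set.Finite.mem_toFinset, Function.mem_support, hp]
  have hSP : ∀ p, x p ≠ 0 → p ∈ P := by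
    intro p hp
    exact Finset.mem_product.mpr
      ⟨Finset.mem_image_of_mem _ (hmemS p hp), Finset.mem_image_of_mem _ (hmemS p hp)⟩
  have conv1 : ∀ f : (ℝ × ℝ) × (ℝ × ℝ) → ℝ, (∀ p, x p = 0 → f p = 0) →
      ∑ᶠ p, f p = ∑ p ∈ P, f p := by
    intro f hf
    refine finsum_eq_sum_of_support_subset f ?_
    intro p hp
    simp only [Function.mem_support] at hp
    by_contra hc
    exact hp (hf p (by by_contra hx0; exact hc (Finset.mem_coe.mpr (hSP p hx0))))
  have conv2 : ∀ (s : ℝ × ℝ) (f : ℝ × ℝ → ℝ), (∀ r, x (r, s) = 0 → f r = 0) →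
      ∑ᶠ r, f r = ∑ r ∈ T, f r := by
    intro s f hf
    refine finsum_eq_sum_of_support_subset f ?_
    intro r hr
    simp only [Function.mem_support] at hr
    by_contra hc
    refine hr (hf r ?_)
    by_contra hx0
    exact hc (Finset.mem_coe.mpr (Finset.mem_image_of_mem Prod.fst (hmemS (r, s) hx0)))
  -- Key lemma: conditional mean of r_i given s equals s_i
  have key : ∀ s : ℝ × ℝ, 0 < (∑ r ∈ T, x (r, s)) →
      (∑ r ∈ T, x (r, s) * r.1) = s.1 * (∑ r ∈ T, x (r, s)) ∧
      (∑ r ∈ T, x (r, s) * r.2) = s.2 * (∑ r ∈ T, x (r, s)) := by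
    intro s hm
    obtain ⟨r0, hr0T, hr0⟩ : ∃ r ∈ T, x (r, s) ≠ 0 := by
      by_contra h
      push_neg at h
      rw [Finset.sum_eq_zero h] at hm
      exact lt_irrefl 0 hm
    have hsq : InUnitSq s := hxsq (r0, s) hr0
    have hsU : s ∈ U := Finset.mem_image_of_mem Prod.snd (hmemS (r0, s) hr0)
    have hm' : 0 < ∑ᶠ r, x (r, s) := by
      rw [conv2 s _ (fun r h => h)]; exact hm
    obtain ⟨hI1, hI2⟩ := hind s hm'
    obtain ⟨hC1, hC2⟩ := hcal s.1 hsq.1 hsq.2.1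
    obtain ⟨hC1', hC2'⟩ := hcal s.2 hsq.2.2.1 hsq.2.2.2
    -- convert all finsums to finset sums
    rw [conv2 s _ (fun r h => h), conv2 s _ (fun r h => by rw [h]; ring),
        conv1 _ (fun p h => by simp [h]), conv1 _ (fun p h => by simp [h])] at hI1
    rw [conv2 s _ (fun r h => h), conv2 s _ (fun r h => by rw [h]; ring),
        conv1 _ (fun p h => by simp [h]), conv1 _ (fun p h => by simp [h])] at hI2
    rw [conv1 _ (fun p h => by simp [h])] at hC1
    rw [conv1 _ (fun p h => by simp [h])] at hC2'
    -- derive B = c * M for coordinate 1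
    have hB1 : (∑ p ∈ P, if p.2.1 = s.1 then x p * p.1.1 else 0)
        = s.1 * (∑ p ∈ P, if p.2.1 = s.1 then x p else 0) := by
      have h2 : ∑ p ∈ P, ((if p.2.1 = s.1 then x p * p.1.1 else 0)
          - s.1 * (if p.2.1 = s.1 then x p else 0))
          = ∑ p ∈ P, (if p.2.1 = s.1 then x p * (p.1.1 - s.1) else 0) := by
        refine Finset.sum_congr rfl (fun p _ => ?_)
        split_ifs <;> ring
      rw [Finset.sum_sub_distrib, ← Finset.mul_sum, hC1] at h2
      exact sub_eq_zero.mp h2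
    have hB2 : (∑ p ∈ P, if p.2.2 = s.2 then x p * p.1.2 else 0)
        = s.2 * (∑ p ∈ P, if p.2.2 = s.2 then x p else 0) := by
      have h2 : ∑ p ∈ P, ((if p.2.2 = s.2 then x p * p.1.2 else 0)
          - s.2 * (if p.2.2 = s.2 then x p else 0))
          = ∑ p ∈ P, (if p.2.2 = s.2 then x p * (p.1.2 - s.2) else 0) := by
        refine Finset.sum_congr rfl (fun p _ => ?_)
        split_ifs <;> ring
      rw [Finset.sum_sub_distrib, ← Finset.mul_sum, hC2'] at h2
      exact sub_eq_zero.mp h2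
    -- m ≤ M
    have hmP : (∑ r ∈ T, x (r, s)) = ∑ p ∈ P, if p.2 = s then x p else 0 := by
      rw [hPdef, Finset.sum_product]
      refine Finset.sum_congr rfl (fun r _ => ?_)
      exact ((Finset.sum_ite_eq' U s (fun s' => x (r, s'))).trans (if_pos hsU)).symm
    have hMm1 : (∑ r ∈ T, x (r, s)) ≤ ∑ p ∈ P, if p.2.1 = s.1 then x p else 0 := by
      rw [hmP]
      refine Finset.sum_le_sum (fun p _ => ?_)
      by_cases h : p.2 = s
      · rw [if_pos h, if_pos (by rw [h])]
      · rw [if_neg h]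
        split_ifs
        · exact hxnn p
        · exact le_refl 0
    have hMm2 : (∑ r ∈ T, x (r, s)) ≤ ∑ p ∈ P, if p.2.2 = s.2 then x p else 0 := by
      rw [hmP]
      refine Finset.sum_le_sum (fun p _ => ?_)
      by_cases h : p.2 = s
      · rw [if_pos h, if_pos (by rw [h])]
      · rw [if_neg h]
        split_ifs
        · exact hxnn p
        · exact le_refl 0
    have hM1 : 0 < ∑ p ∈ P, if p.2.1 = s.1 then x p else 0 := lt_of_lt_of_le hm hMm1
    have hM2 : 0 < ∑ p ∈ P, if p.2.2 = s.2 then x p else 0 := lt_of_lt_of_le hm hMm2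
    constructor
    · have h3 : (∑ r ∈ T, x (r, s) * r.1) * (∑ p ∈ P, if p.2.1 = s.1 then x p else 0)
          = (s.1 * (∑ r ∈ T, x (r, s))) * (∑ p ∈ P, if p.2.1 = s.1 then x p else 0) := by
        rw [hI1, hB1]; ring
      exact mul_right_cancel₀ (ne_of_gt hM1) h3
    · have h3 : (∑ r ∈ T, x (r, s) * r.2) * (∑ p ∈ P, if p.2.2 = s.2 then x p else 0)
          = (s.2 * (∑ r ∈ T, x (r, s))) * (∑ p ∈ P, if p.2.2 = s.2 then x p else 0) := by
        rw [hI2, hB2]; ring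
      exact mul_right_cancel₀ (ne_of_gt hM2) h3
  -- Main computation
  rw [Rev, conv1 _ (fun p h => by rw [h]; ring), conv1 _ (fun p h => by rw [h]; ring),
      hPdef, Finset.sum_product_right, Finset.sum_product_right]
  refine Finset.sum_congr rfl (fun s hsU => ?_)
  rcases eq_or_lt_of_le (Finset.sum_nonneg (fun r _ => hxnn (r, s)) :
      0 ≤ ∑ r ∈ T, x (r, s)) with hm | hm
  · -- zero mass on this signal: all terms vanish
    have hall : ∀ r ∈ T, x (r, s) = 0 := by
      intro r hr
      exact (Finset.sum_eq_zero_iff_of_nonneg (fun r _ => hxnn (r, s))).mp hm.symm r hr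
    rw [Finset.sum_eq_zero (fun r hr => by rw [hall r hr]; ring),
        Finset.sum_eq_zero (fun r hr => by rw [hall r hr]; ring)]
  · obtain ⟨k1, k2⟩ := key s hm
    obtain ⟨r0, hr0T, hr0⟩ : ∃ r ∈ T, x (r, s) ≠ 0 := by
      by_contra h
      push_neg at h
      rw [Finset.sum_eq_zero h] at hm
      exact lt_irrefl 0 hm
    have hsq : InUnitSq s := hxsq (r0, s) hr0
    have hs1 : 0 ≤ s.1 := hsq.1
    have hs2 : 0 ≤ s.2 := hsq.2.2.1
    have hrhs : (∑ r ∈ T, x (r, s) * min (v1 * s.1) (v2 * s.2))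
        = (∑ r ∈ T, x (r, s)) * min (v1 * s.1) (v2 * s.2) := by
      rw [Finset.sum_mul]
    rw [hrhs]
    rcases lt_trichotomy (v1 * s.1) (v2 * s.2) with hlt | heq | hgt
    · -- bidder 2 wins
      have hs2ne : s.2 ≠ 0 := by
        intro h0
        rw [h0, mul_zero] at hlt
        exact absurd hlt (not_lt.mpr (mul_nonneg hv1 hs1))
      have hpay : ∀ r : ℝ × ℝ, pay v1 v2 r s = r.2 * (v1 * s.1 / s.2) := by
        intro r
        rw [pay, if_neg (not_lt.mpr (le_of_lt hlt)), if_pos hlt]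
      calc ∑ r ∈ T, x (r, s) * pay v1 v2 r s
          = ∑ r ∈ T, (x (r, s) * r.2) * (v1 * s.1 / s.2) := by
            refine Finset.sum_congr rfl (fun r _ => ?_)
            rw [hpay r]; ring
        _ = (∑ r ∈ T, x (r, s) * r.2) * (v1 * s.1 / s.2) := by rw [Finset.sum_mul]
        _ = (∑ r ∈ T, x (r, s)) * min (v1 * s.1) (v2 * s.2) := by
            rw [k2, min_eq_left (le_of_lt hlt)]
            field_simp
    · -- tie
      have hpay : ∀ r : ℝ × ℝ, pay v1 v2 r s
          = (r.1 * (v2 * s.2 / s.1) + r.2 * (v1 * s.1 / s.2)) / 2 := by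
        intro r
        rw [pay, if_neg (by rw [heq]; exact lt_irrefl _), if_neg (by rw [heq]; exact lt_irrefl _)]
      have hmin : min (v1 * s.1) (v2 * s.2) = v1 * s.1 := min_eq_left (le_of_eq heq)
      calc ∑ r ∈ T, x (r, s) * pay v1 v2 r s
          = ∑ r ∈ T, ((x (r, s) * r.1) * (v2 * s.2 / s.1 / 2)
              + (x (r, s) * r.2) * (v1 * s.1 / s.2 / 2)) := by
            refine Finset.sum_congr rfl (fun r _ => ?_)
            rw [hpay r]; ring
        _ = (∑ r ∈ T, x (r, s) * r.1) * (v2 * s.2 / s.1 / 2)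
              + (∑ r ∈ T, x (r, s) * r.2) * (v1 * s.1 / s.2 / 2) := by
            rw [Finset.sum_add_distrib, Finset.sum_mul, Finset.sum_mul]
        _ = (∑ r ∈ T, x (r, s)) * min (v1 * s.1) (v2 * s.2) := by
            rw [k1, k2, hmin]
            by_cases h1 : s.1 = 0
            · have hz1 : v1 * s.1 = 0 := by rw [h1, mul_zero]
              have hz2 : v2 * s.2 = 0 := by rw [← heq, hz1]
              rw [hz1, hz2]
              simp
            · by_cases h2 : s.2 = 0
              · have hz1 : v1 * s.1 = 0 := by rw [heq, h2, mul_zero]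
                have hz2 : v2 * s.2 = 0 := by rw [← heq]; exact hz1
                rw [hz1, hz2]
                simp
              · rw [heq]
                field_simp
                ring
    · -- bidder 1 wins
      have hs1ne : s.1 ≠ 0 := by
        intro h0
        rw [h0, mul_zero] at hgt
        exact absurd hgt (not_lt.mpr (mul_nonneg hv2 hs2))
      have hpay : ∀ r : ℝ × ℝ, pay v1 v2 r s = r.1 * (v2 * s.2 / s.1) := by
        intro r
        rw [pay, if_pos hgt]
      calc ∑ r ∈ T, x (r, s) * pay v1 v2 r s
          = ∑ r ∈ T, (x (r, s) * r.1) * (v2 * s.2 / s.1) := by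
            refine Finset.sum_congr rfl (fun r _ => ?_)
            rw [hpay r]; ring
        _ = (∑ r ∈ T, x (r, s) * r.1) * (v2 * s.2 / s.1) := by rw [Finset.sum_mul]
        _ = (∑ r ∈ T, x (r, s)) * min (v1 * s.1) (v2 * s.2) := by
            rw [k1, min_eq_right (le_of_lt hgt)]
            field_simp
end
end

section
/- Let g be a finitely supported prior on CTR pairs for two bidders with values v1, v2 ≥ 0. If g assigns positive probability both to the event {r : v1·r1 > v2·r2} and to the event {r : v1·r1 < v2·r2}, then ∑_r g(r)·min(v1·r1, v2·r2) < min(v1·∑_r g(r)·r1, v2·∑_r g(r)·r2); that is, the full-disclosure revenue is strictly smaller than the no-disclosure revenue. -/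
open scoped Classical

noncomputable section

/-- if both rankings of value-weighted CTRs occur with positive
probability, full-disclosure revenue is strictly below no-disclosure revenue. -/
theorem fullDisclosure_lt_noDisclosure
    (v1 v2 : ℝ) (hv1 : 0 ≤ v1) (hv2 : 0 ≤ v2)
    (g : ℝ × ℝ → ℝ) (hg : IsPrior g)
    (h1 : 0 < ∑ᶠ r : ℝ × ℝ, if v2 * r.2 < v1 * r.1 then g r else 0)
    (h2 : 0 < ∑ᶠ r : ℝ × ℝ, if v1 * r.1 < v2 * r.2 then g r else 0) :
    fullDisclosureRev v1 v2 g < noDisclosureRev v1 v2 g := by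
  obtain ⟨hfin, hpos, _, _⟩ := hg
  set T := hfin.toFinset with hT
  have hsub : ∀ (f : ℝ × ℝ → ℝ), (∀ r, g r = 0 → f r = 0) →
      (∑ᶠ r, f r) = ∑ r ∈ T, f r := by
    intro f hf
    apply finsum_eq_finset_sum_of_support_subset
    intro r hr
    simp only [hT, Set.Finite.coe_toFinset, Function.mem_support]
    intro h0
    exact hr (hf r h0)
  have e1 : (∑ᶠ r : ℝ × ℝ, if v2 * r.2 < v1 * r.1 then g r else 0)
      = ∑ r ∈ T, if v2 * r.2 < v1 * r.1 then g r else 0 :=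
    hsub _ (fun r h0 => by simp [h0])
  have e2 : (∑ᶠ r : ℝ × ℝ, if v1 * r.1 < v2 * r.2 then g r else 0)
      = ∑ r ∈ T, if v1 * r.1 < v2 * r.2 then g r else 0 :=
    hsub _ (fun r h0 => by simp [h0])
  have efull : fullDisclosureRev v1 v2 g
      = ∑ r ∈ T, g r * min (v1 * r.1) (v2 * r.2) :=
    hsub _ (fun r h0 => by simp [h0])
  have em1 : (∑ᶠ r : ℝ × ℝ, g r * r.1) = ∑ r ∈ T, g r * r.1 :=
    hsub _ (fun r h0 => by simp [h0])
  have em2 : (∑ᶠ r : ℝ × ℝ, g r * r.2) = ∑ r ∈ T, g r * r.2 :=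
    hsub _ (fun r h0 => by simp [h0])
  rw [e1] at h1
  rw [e2] at h2
  obtain ⟨r1, hr1T, hr1⟩ := Finset.exists_ne_zero_of_sum_ne_zero h1.ne'
  obtain ⟨r2, hr2T, hr2⟩ := Finset.exists_ne_zero_of_sum_ne_zero h2.ne'
  have hc1 : v2 * r1.2 < v1 * r1.1 ∧ g r1 ≠ 0 := by
    by_cases h : v2 * r1.2 < v1 * r1.1 <;> simp [h] at hr1 <;> exact ⟨h, hr1⟩
  have hc2 : v1 * r2.1 < v2 * r2.2 ∧ g r2 ≠ 0 := by
    by_cases h : v1 * r2.1 < v2 * r2.2 <;> simp [h] at hr2 <;> exact ⟨h, hr2⟩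
  have lt1 : fullDisclosureRev v1 v2 g < v1 * ∑ᶠ r : ℝ × ℝ, g r * r.1 := by
    rw [efull, em1, Finset.mul_sum]
    apply Finset.sum_lt_sum
    · intro i _
      calc g i * min (v1 * i.1) (v2 * i.2) ≤ g i * (v1 * i.1) :=
            mul_le_mul_of_nonneg_left (min_le_left _ _) (hpos i)
        _ = v1 * (g i * i.1) := by ring
    · refine ⟨r1, hr1T, ?_⟩
      have hg1 : 0 < g r1 := lt_of_le_of_ne (hpos r1) (Ne.symm hc1.2)
      calc g r1 * min (v1 * r1.1) (v2 * r1.2) = g r1 * (v2 * r1.2) := by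
            rw [min_eq_right hc1.1.le]
        _ < g r1 * (v1 * r1.1) := by
            exact mul_lt_mul_of_pos_left hc1.1 hg1
        _ = v1 * (g r1 * r1.1) := by ring
  have lt2 : fullDisclosureRev v1 v2 g < v2 * ∑ᶠ r : ℝ × ℝ, g r * r.2 := by
    rw [efull, em2, Finset.mul_sum]
    apply Finset.sum_lt_sum
    · intro i _
      calc g i * min (v1 * i.1) (v2 * i.2) ≤ g i * (v2 * i.2) :=
            mul_le_mul_of_nonneg_left (min_le_right _ _) (hpos i)
        _ = v2 * (g i * i.2) := by ring
    · refine ⟨r2, hr2T, ?_⟩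
      have hg2 : 0 < g r2 := lt_of_le_of_ne (hpos r2) (Ne.symm hc2.2)
      calc g r2 * min (v1 * r2.1) (v2 * r2.2) = g r2 * (v1 * r2.1) := by
            rw [min_eq_left hc2.1.le]
        _ < g r2 * (v2 * r2.2) := by
            exact mul_lt_mul_of_pos_left hc2.1 hg2
        _ = v2 * (g r2 * r2.2) := by ring
  exact lt_min lt1 lt2
end
end

section
/- ('Flipping the square'.) Let v1 = v2 = 1 and let g be the uniform prior on the four CTR pairs (1/2,1/2), (1/2,1), (1,1/2), (1,1), each with probability 1/4. For every ε with 0 < ε < 1/4, the function x defined by x((1/2,1/2),(3/4−ε,3/4−ε)) = ε, x((1/2,1/2),(3/4+ε,3/4+ε)) = 1/4−ε, x((1/2,1),(3/4−ε,3/4+ε)) = 1/4, x((1,1/2),(3/4+ε,3/4−ε)) = 1/4, x((1,1),(3/4−ε,3/4−ε)) = 1/4−ε, x((1,1),(3/4+ε,3/4+ε)) = ε, and x(r,s) = 0 otherwise, is a calibrated information structure for g, and its expected revenue is Rev(x) = (21−4ε)/(24+32ε). -/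
open scoped Classical

noncomputable section

/-- The uniform prior on the four CTR pairs (1/2,1/2), (1/2,1), (1,1/2), (1,1). -/
def gSquare : ℝ × ℝ → ℝ := fun r =>
  if r = ((1:ℝ)/2, (1:ℝ)/2) ∨ r = ((1:ℝ)/2, 1) ∨ r = (1, (1:ℝ)/2) ∨ r = ((1:ℝ), (1:ℝ))
  then 1/4 else 0

/-- The "flipping the square" information structure with parameter ε. -/
def xSquare (ε : ℝ) : (ℝ × ℝ) × (ℝ × ℝ) → ℝ := fun p =>
  if p = (((1:ℝ)/2, (1:ℝ)/2), (3/4 - ε, 3/4 - ε)) then ε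
  else if p = (((1:ℝ)/2, (1:ℝ)/2), (3/4 + ε, 3/4 + ε)) then 1/4 - ε
  else if p = (((1:ℝ)/2, (1:ℝ)), (3/4 - ε, 3/4 + ε)) then 1/4
  else if p = (((1:ℝ), (1:ℝ)/2), (3/4 + ε, 3/4 - ε)) then 1/4
  else if p = (((1:ℝ), (1:ℝ)), (3/4 - ε, 3/4 - ε)) then 1/4 - ε
  else if p = (((1:ℝ), (1:ℝ)), (3/4 + ε, 3/4 + ε)) then ε
  else 0

lemma finsum_six {α : Type*} (f : α → ℝ) (q1 q2 q3 q4 q5 q6 : α)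
    (h12 : q1 ≠ q2) (h13 : q1 ≠ q3) (h14 : q1 ≠ q4) (h15 : q1 ≠ q5) (h16 : q1 ≠ q6)
    (h23 : q2 ≠ q3) (h24 : q2 ≠ q4) (h25 : q2 ≠ q5) (h26 : q2 ≠ q6)
    (h34 : q3 ≠ q4) (h35 : q3 ≠ q5) (h36 : q3 ≠ q6)
    (h45 : q4 ≠ q5) (h46 : q4 ≠ q6) (h56 : q5 ≠ q6)
    (hf : ∀ p, f p ≠ 0 → p = q1 ∨ p = q2 ∨ p = q3 ∨ p = q4 ∨ p = q5 ∨ p = q6) :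
    ∑ᶠ p, f p = f q1 + f q2 + f q3 + f q4 + f q5 + f q6 := by
  classical
  have hsub : Function.support f ⊆ ↑({q1, q2, q3, q4, q5, q6} : Finset α) := by
    intro p hp; simpa using hf p hp
  rw [finsum_eq_finset_sum_of_support_subset f hsub]
  rw [Finset.sum_insert (by simp [h12, h13, h14, h15, h16]),
      Finset.sum_insert (by simp [h23, h24, h25, h26]),
      Finset.sum_insert (by simp [h34, h35, h36]),
      Finset.sum_insert (by simp [h45, h46]),
      Finset.sum_insert (by simp [h56]),
      Finset.sum_singleton]
  ring

lemma finsum_four {α : Type*} (f : α → ℝ) (q1 q2 q3 q4 : α)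
    (h12 : q1 ≠ q2) (h13 : q1 ≠ q3) (h14 : q1 ≠ q4)
    (h23 : q2 ≠ q3) (h24 : q2 ≠ q4) (h34 : q3 ≠ q4)
    (hf : ∀ p, f p ≠ 0 → p = q1 ∨ p = q2 ∨ p = q3 ∨ p = q4) :
    ∑ᶠ p, f p = f q1 + f q2 + f q3 + f q4 := by
  classical
  have hsub : Function.support f ⊆ ↑({q1, q2, q3, q4} : Finset α) := by
    intro p hp; simpa using hf p hp
  rw [finsum_eq_finset_sum_of_support_subset f hsub]
  rw [Finset.sum_insert (by simp [h12, h13, h14]),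
      Finset.sum_insert (by simp [h23, h24]),
      Finset.sum_insert (by simp [h34]),
      Finset.sum_singleton]
  ring

lemma xSquare_supp (ε : ℝ) : ∀ p, xSquare ε p ≠ 0 →
    p = (((1:ℝ)/2, (1:ℝ)/2), (3/4 - ε, 3/4 - ε)) ∨
    p = (((1:ℝ)/2, (1:ℝ)/2), (3/4 + ε, 3/4 + ε)) ∨
    p = (((1:ℝ)/2, (1:ℝ)), (3/4 - ε, 3/4 + ε)) ∨
    p = (((1:ℝ), (1:ℝ)/2), (3/4 + ε, 3/4 - ε)) ∨
    p = (((1:ℝ), (1:ℝ)), (3/4 - ε, 3/4 - ε)) ∨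
    p = (((1:ℝ), (1:ℝ)), (3/4 + ε, 3/4 + ε)) := by
  intro p hp
  unfold xSquare at hp
  split_ifs at hp <;> tauto

set_option maxHeartbeats 2000000 in
/-- "flipping the square" is a calibrated information structure for
the uniform prior and extracts revenue (21 − 4ε)/(24 + 32ε). -/
theorem flipping_the_square (ε : ℝ) (hε0 : 0 < ε) (hε1 : ε < 1/4) :
    IsInfoStructure gSquare (xSquare ε) ∧ Calibrated (xSquare ε) ∧
      Rev 1 1 (xSquare ε) = (21 - 4 * ε) / (24 + 32 * ε) := by
  have hab : (3/4 - ε : ℝ) ≠ 3/4 + ε := by linarith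
  have hab' : (3/4 + ε : ℝ) ≠ 3/4 - ε := by linarith
  have ha0 : (0:ℝ) < 3/4 - ε := by linarith
  have hb0 : (0:ℝ) < 3/4 + ε := by linarith
  have hhalf : ((1:ℝ)/2) ≠ 1 := by norm_num
  -- evaluations of xSquare at the six support points
  have e1 : xSquare ε (((1:ℝ)/2, (1:ℝ)/2), (3/4 - ε, 3/4 - ε)) = ε := by
    simp [xSquare]
  have e2 : xSquare ε (((1:ℝ)/2, (1:ℝ)/2), (3/4 + ε, 3/4 + ε)) = 1/4 - ε := by
    simp [xSquare, Prod.ext_iff, hab, hab']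
  have e3 : xSquare ε (((1:ℝ)/2, (1:ℝ)), (3/4 - ε, 3/4 + ε)) = 1/4 := by
    norm_num [xSquare, Prod.ext_iff, hab, hab']
  have e4 : xSquare ε (((1:ℝ), (1:ℝ)/2), (3/4 + ε, 3/4 - ε)) = 1/4 := by
    norm_num [xSquare, Prod.ext_iff, hab, hab']
  have e5 : xSquare ε (((1:ℝ), (1:ℝ)), (3/4 - ε, 3/4 - ε)) = 1/4 - ε := by
    norm_num [xSquare, Prod.ext_iff, hab, hab']
  have e6 : xSquare ε (((1:ℝ), (1:ℝ)), (3/4 + ε, 3/4 + ε)) = ε := by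
    norm_num [xSquare, Prod.ext_iff, hab, hab']
  refine ⟨⟨?_, ?_, ?_, ?_⟩, ?_, ?_⟩
  · -- finite support
    apply Set.Finite.subset (Set.toFinite
      ({(((1:ℝ)/2, (1:ℝ)/2), (3/4 - ε, 3/4 - ε)),
        (((1:ℝ)/2, (1:ℝ)/2), (3/4 + ε, 3/4 + ε)),
        (((1:ℝ)/2, (1:ℝ)), (3/4 - ε, 3/4 + ε)),
        (((1:ℝ), (1:ℝ)/2), (3/4 + ε, 3/4 - ε)),
        (((1:ℝ), (1:ℝ)), (3/4 - ε, 3/4 - ε)),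
        (((1:ℝ), (1:ℝ)), (3/4 + ε, 3/4 + ε))} : Set ((ℝ × ℝ) × (ℝ × ℝ))))
    intro p hp
    simpa using xSquare_supp ε p hp
  · -- nonneg
    intro p
    unfold xSquare
    split_ifs <;> linarith
  · -- signals in unit square
    intro p hp
    rcases xSquare_supp ε p hp with rfl | rfl | rfl | rfl | rfl | rfl <;>
      exact ⟨by norm_num; linarith, by norm_num; linarith, by norm_num; linarith,
        by norm_num; linarith⟩
  · -- marginal
    intro r
    rw [finsum_four (fun s => xSquare ε (r, s)) (3/4 - ε, 3/4 - ε) (3/4 + ε, 3/4 + ε)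
        (3/4 - ε, 3/4 + ε) (3/4 + ε, 3/4 - ε)
        (by norm_num [Prod.ext_iff, hab, hab']) (by norm_num [Prod.ext_iff, hab, hab'])
        (by norm_num [Prod.ext_iff, hab, hab']) (by norm_num [Prod.ext_iff, hab, hab'])
        (by norm_num [Prod.ext_iff, hab, hab']) (by norm_num [Prod.ext_iff, hab, hab'])
        (by
          intro s hs
          rcases xSquare_supp ε (r, s) hs with h | h | h | h | h | h <;>
            simp_all [Prod.ext_iff])]
    by_cases h1 : r = ((1:ℝ)/2, (1:ℝ)/2)
    · subst h1
      rw [e1, e2]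
      have z1 : xSquare ε (((1:ℝ)/2, (1:ℝ)/2), (3/4 - ε, 3/4 + ε)) = 0 := by
        norm_num [xSquare, Prod.ext_iff, hab, hab']
      have z2 : xSquare ε (((1:ℝ)/2, (1:ℝ)/2), (3/4 + ε, 3/4 - ε)) = 0 := by
        norm_num [xSquare, Prod.ext_iff, hab, hab']
      rw [z1, z2]
      norm_num [gSquare]
    by_cases h2 : r = ((1:ℝ)/2, (1:ℝ))
    · subst h2
      rw [e3]
      have z1 : xSquare ε (((1:ℝ)/2, (1:ℝ)), (3/4 - ε, 3/4 - ε)) = 0 := by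
        norm_num [xSquare, Prod.ext_iff, hab, hab']
      have z2 : xSquare ε (((1:ℝ)/2, (1:ℝ)), (3/4 + ε, 3/4 + ε)) = 0 := by
        norm_num [xSquare, Prod.ext_iff, hab, hab']
      have z3 : xSquare ε (((1:ℝ)/2, (1:ℝ)), (3/4 + ε, 3/4 - ε)) = 0 := by
        norm_num [xSquare, Prod.ext_iff, hab, hab']
      rw [z1, z2, z3]
      norm_num [gSquare]
    by_cases h3 : r = ((1:ℝ), (1:ℝ)/2)
    · subst h3
      rw [e4]
      have z1 : xSquare ε (((1:ℝ), (1:ℝ)/2), (3/4 - ε, 3/4 - ε)) = 0 := by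
        norm_num [xSquare, Prod.ext_iff, hab, hab']
      have z2 : xSquare ε (((1:ℝ), (1:ℝ)/2), (3/4 + ε, 3/4 + ε)) = 0 := by
        norm_num [xSquare, Prod.ext_iff, hab, hab']
      have z3 : xSquare ε (((1:ℝ), (1:ℝ)/2), (3/4 - ε, 3/4 + ε)) = 0 := by
        norm_num [xSquare, Prod.ext_iff, hab, hab']
      rw [z1, z2, z3]
      norm_num [gSquare]
    by_cases h4 : r = ((1:ℝ), (1:ℝ))
    · subst h4
      rw [e5, e6]
      have z1 : xSquare ε (((1:ℝ), (1:ℝ)), (3/4 - ε, 3/4 + ε)) = 0 := by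
        norm_num [xSquare, Prod.ext_iff, hab, hab']
      have z2 : xSquare ε (((1:ℝ), (1:ℝ)), (3/4 + ε, 3/4 - ε)) = 0 := by
        norm_num [xSquare, Prod.ext_iff, hab, hab']
      rw [z1, z2]
      norm_num [gSquare]
    · have hz : ∀ s : ℝ × ℝ, xSquare ε (r, s) = 0 := by
        intro s
        by_contra hs
        rcases xSquare_supp ε (r, s) hs with h | h | h | h | h | h <;>
          simp_all [Prod.ext_iff]
      rw [hz, hz, hz, hz]
      unfold gSquare
      rw [if_neg (by push_neg; exact ⟨h1, h2, h3, h4⟩)]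
      norm_num
  · -- calibration
    intro c hc0 hc1
    constructor
    · rw [finsum_six (fun p => if p.2.1 = c then xSquare ε p * (p.1.1 - c) else 0)
          (((1:ℝ)/2, (1:ℝ)/2), (3/4 - ε, 3/4 - ε))
          (((1:ℝ)/2, (1:ℝ)/2), (3/4 + ε, 3/4 + ε))
          (((1:ℝ)/2, (1:ℝ)), (3/4 - ε, 3/4 + ε))
          (((1:ℝ), (1:ℝ)/2), (3/4 + ε, 3/4 - ε))
          (((1:ℝ), (1:ℝ)), (3/4 - ε, 3/4 - ε))
          (((1:ℝ), (1:ℝ)), (3/4 + ε, 3/4 + ε))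
          (by norm_num [Prod.ext_iff, hab, hab']) (by norm_num [Prod.ext_iff, hab, hab'])
          (by norm_num [Prod.ext_iff, hab, hab']) (by norm_num [Prod.ext_iff, hab, hab'])
          (by norm_num [Prod.ext_iff, hab, hab']) (by norm_num [Prod.ext_iff, hab, hab'])
          (by norm_num [Prod.ext_iff, hab, hab']) (by norm_num [Prod.ext_iff, hab, hab'])
          (by norm_num [Prod.ext_iff, hab, hab']) (by norm_num [Prod.ext_iff, hab, hab'])
          (by norm_num [Prod.ext_iff, hab, hab']) (by norm_num [Prod.ext_iff, hab, hab'])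
          (by norm_num [Prod.ext_iff, hab, hab']) (by norm_num [Prod.ext_iff, hab, hab']) (by norm_num [Prod.ext_iff, hab, hab'])
          (by
            intro p hp
            apply xSquare_supp ε p
            intro h
            simp [h] at hp)]
      simp only [e1, e2, e3, e4, e5, e6]
      by_cases hca : c = 3/4 - ε
      · subst hca
        simp only [eq_self_iff_true, if_true, if_neg hab']
        ring
      by_cases hcb : c = 3/4 + ε
      · subst hcb
        simp only [eq_self_iff_true, if_true, if_neg hab]
        ring
      · have n1 : (3/4 - ε : ℝ) ≠ c := fun h => hca h.symm
        have n2 : (3/4 + ε : ℝ) ≠ c := fun h => hcb h.symm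
        simp only [if_neg n1, if_neg n2]
        ring
    · rw [finsum_six (fun p => if p.2.2 = c then xSquare ε p * (p.1.2 - c) else 0)
          (((1:ℝ)/2, (1:ℝ)/2), (3/4 - ε, 3/4 - ε))
          (((1:ℝ)/2, (1:ℝ)/2), (3/4 + ε, 3/4 + ε))
          (((1:ℝ)/2, (1:ℝ)), (3/4 - ε, 3/4 + ε))
          (((1:ℝ), (1:ℝ)/2), (3/4 + ε, 3/4 - ε))
          (((1:ℝ), (1:ℝ)), (3/4 - ε, 3/4 - ε))
          (((1:ℝ), (1:ℝ)), (3/4 + ε, 3/4 + ε))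
          (by norm_num [Prod.ext_iff, hab, hab']) (by norm_num [Prod.ext_iff, hab, hab'])
          (by norm_num [Prod.ext_iff, hab, hab']) (by norm_num [Prod.ext_iff, hab, hab'])
          (by norm_num [Prod.ext_iff, hab, hab']) (by norm_num [Prod.ext_iff, hab, hab'])
          (by norm_num [Prod.ext_iff, hab, hab']) (by norm_num [Prod.ext_iff, hab, hab'])
          (by norm_num [Prod.ext_iff, hab, hab']) (by norm_num [Prod.ext_iff, hab, hab'])
          (by norm_num [Prod.ext_iff, hab, hab']) (by norm_num [Prod.ext_iff, hab, hab'])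
          (by norm_num [Prod.ext_iff, hab, hab']) (by norm_num [Prod.ext_iff, hab, hab']) (by norm_num [Prod.ext_iff, hab, hab'])
          (by
            intro p hp
            apply xSquare_supp ε p
            intro h
            simp [h] at hp)]
      simp only [e1, e2, e3, e4, e5, e6]
      by_cases hca : c = 3/4 - ε
      · subst hca
        simp only [eq_self_iff_true, if_true, if_neg hab']
        ring
      by_cases hcb : c = 3/4 + ε
      · subst hcb
        simp only [eq_self_iff_true, if_true, if_neg hab]
        ring
      · have n1 : (3/4 - ε : ℝ) ≠ c := fun h => hca h.symm
        have n2 : (3/4 + ε : ℝ) ≠ c := fun h => hcb h.symm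
        simp only [if_neg n1, if_neg n2]
        ring
  · -- revenue
    have pay1 : pay 1 1 ((1:ℝ)/2, (1:ℝ)/2) (3/4 - ε, 3/4 - ε) = 1/2 := by
      unfold pay
      rw [if_neg (by simp), if_neg (by simp)]
      norm_num [div_self ha0.ne']
    have pay2 : pay 1 1 ((1:ℝ)/2, (1:ℝ)/2) (3/4 + ε, 3/4 + ε) = 1/2 := by
      unfold pay
      rw [if_neg (by simp), if_neg (by simp)]
      norm_num [div_self hb0.ne']
    have pay3 : pay 1 1 ((1:ℝ)/2, (1:ℝ)) (3/4 - ε, 3/4 + ε) = (3/4 - ε) / (3/4 + ε) := by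
      unfold pay
      rw [if_neg (by simp; linarith), if_pos (by simp; linarith)]
      norm_num
    have pay4 : pay 1 1 ((1:ℝ), (1:ℝ)/2) (3/4 + ε, 3/4 - ε) = (3/4 - ε) / (3/4 + ε) := by
      unfold pay
      rw [if_pos (by simp; linarith)]
      norm_num
    have pay5 : pay 1 1 ((1:ℝ), (1:ℝ)) (3/4 - ε, 3/4 - ε) = 1 := by
      unfold pay
      rw [if_neg (by simp), if_neg (by simp)]
      norm_num [div_self ha0.ne']
    have pay6 : pay 1 1 ((1:ℝ), (1:ℝ)) (3/4 + ε, 3/4 + ε) = 1 := by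
      unfold pay
      rw [if_neg (by simp), if_neg (by simp)]
      norm_num [div_self hb0.ne']
    unfold Rev
    rw [finsum_six (fun p => xSquare ε p * pay 1 1 p.1 p.2)
        (((1:ℝ)/2, (1:ℝ)/2), (3/4 - ε, 3/4 - ε))
        (((1:ℝ)/2, (1:ℝ)/2), (3/4 + ε, 3/4 + ε))
        (((1:ℝ)/2, (1:ℝ)), (3/4 - ε, 3/4 + ε))
        (((1:ℝ), (1:ℝ)/2), (3/4 + ε, 3/4 - ε))
        (((1:ℝ), (1:ℝ)), (3/4 - ε, 3/4 - ε))
        (((1:ℝ), (1:ℝ)), (3/4 + ε, 3/4 + ε))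
        (by norm_num [Prod.ext_iff, hab, hab']) (by norm_num [Prod.ext_iff, hab, hab'])
        (by norm_num [Prod.ext_iff, hab, hab']) (by norm_num [Prod.ext_iff, hab, hab'])
        (by norm_num [Prod.ext_iff, hab, hab']) (by norm_num [Prod.ext_iff, hab, hab'])
        (by norm_num [Prod.ext_iff, hab, hab']) (by norm_num [Prod.ext_iff, hab, hab'])
        (by norm_num [Prod.ext_iff, hab, hab']) (by norm_num [Prod.ext_iff, hab, hab'])
        (by norm_num [Prod.ext_iff, hab, hab']) (by norm_num [Prod.ext_iff, hab, hab'])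
        (by norm_num [Prod.ext_iff, hab, hab']) (by norm_num [Prod.ext_iff, hab, hab']) (by norm_num [Prod.ext_iff, hab, hab'])
        (by
          intro p hp
          apply xSquare_supp ε p
          intro h
          simp [h] at hp)]
    simp only [e1, e2, e3, e4, e5, e6, pay1, pay2, pay3, pay4, pay5, pay6]
    have h24 : (24:ℝ) + 32 * ε ≠ 0 := by linarith
    field_simp
    ring
end
end

section
/- (Dispersion along the diagonal.) Consider two bidders with equal values v1 = v2 = v ≥ 0 and the prior g with g((l,h)) = g((h,l)) = 1/2, where 0 ≤ l < h ≤ 1. Then for every ε > 0 there exists a calibrated information structure x for g with Rev(x) ≥ v·h − ε. -/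
open scoped Classical

noncomputable section

/-!
Draw `k` from Binomial(m, 1/2) and a fair coin choosing which bidder has CTR `h`; that bidder
gets the signal `c (k + 1)` and the other one `c k`, on the uniform grid
`c j = l + (h - l) j / (m + 1)`. With `w k = C(m, k) / 2 ^ (m + 1)`, the value `c j` reaches
a high-CTR bidder with weight `w (j - 1)` and a low-CTR bidder with weight `w j`, so
calibration at `c j` is the balance `w (j - 1) (h - c j) = w j (c j - l)`, which here is
`C(m, j - 1) (m + 1 - j) = C(m, j) j`; the calibration sums then telescope.
The high-CTR bidder always wins and pays `v c k / c (k + 1) ≥ v (1 - 1 / (k + 1))` per click,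
and `E[1 / (k + 1)] ≤ 2 / (m + 1)`, so the revenue is at least `v h - 2 v h / (m + 1)`.
-/

open Finset Finsupp

section Finsum

variable {α β ι : Type*}

lemma finsum_mul_eq_finsuppSum (f : α →₀ ℝ) (φ : α → ℝ) :
    ∑ᶠ p, f p * φ p = f.sum fun p a => a * φ p :=
  finsum_eq_sum_of_support_subset _ fun p hp => by
    simpa using Function.support_mul_subset_left _ _ hp

lemma finsum_sum_single_add_single_mul (s : Finset ι) (a b : ι → α) (w : ι → ℝ)
    (φ : α → ℝ) :
    ∑ᶠ p, (∑ i ∈ s, (single (a i) (w i) + single (b i) (w i))) p * φ p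
      = ∑ i ∈ s, w i * (φ (a i) + φ (b i)) := by
  rw [finsum_mul_eq_finsuppSum, ← sum_finsetSum_index (by simp) (by intros; ring)]
  refine Finset.sum_congr rfl fun i _ => ?_
  rw [sum_add_index' (by simp) (by intros; ring), sum_single_index (zero_mul _),
    sum_single_index (zero_mul _)]
  ring

lemma finsum_apply_mk_eq_finsum_mul_ite (x : α × β → ℝ) (r : α) :
    ∑ᶠ t, x (r, t) = ∑ᶠ p, x p * if p.1 = r then 1 else 0 := by
  have hrange : Set.range (Prod.mk r : β → α × β) = {p | p.1 = r} := by
    ext ⟨a, b⟩; simp [eq_comm]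
  rw [← finsum_mem_range (f := x) (Prod.mk_right_injective r), finsum_mem_def, hrange]
  congr 1; ext p
  simp [Set.indicator_apply]

end Finsum

lemma sum_range_balanced_eq_zero {c w : ℕ → ℝ} {l h : ℝ} {n : ℕ} (hc0 : c 0 = l)
    (hwn : w n = 0) (hbal : ∀ k < n, w k * (h - c (k + 1)) = w (k + 1) * (c (k + 1) - l))
    (t : ℝ) :
    ∑ k ∈ range n, w k * ((if c (k + 1) = t then h - t else 0) + if c k = t then l - t else 0)
      = 0 := by
  set T : ℕ → ℝ := fun j => if c j = t then w j * (c j - l) else 0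
  have hstep : ∀ k ∈ range n, w k * ((if c (k + 1) = t then h - t else 0) +
      if c k = t then l - t else 0) = T (k + 1) - T k := by
    intro k hk
    have hbalk := hbal k (mem_range.1 hk)
    simp only [T]
    split_ifs with h1 h2 h2
    · subst h1
      linear_combination hbalk + w k * h2
    · subst h1
      linear_combination hbalk
    · subst h2
      ring
    · ring
  rw [sum_congr rfl hstep, sum_range_sub]
  simp [T, hc0, hwn]

def binomWeight (m k : ℕ) : ℝ := m.choose k / 2 ^ (m + 1)

def diagSignal (l h : ℝ) (m j : ℕ) : ℝ := l + (h - l) * j / (m + 1)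

lemma binomWeight_nonneg (m k : ℕ) : 0 ≤ binomWeight m k := by
  unfold binomWeight; positivity

lemma sum_binomWeight (m : ℕ) : ∑ k ∈ range (m + 1), binomWeight m k = 1 / 2 := by
  simp only [binomWeight, ← sum_div]
  rw [← Nat.cast_sum, Nat.sum_range_choose]
  field_simp
  push_cast
  ring

lemma sum_binomWeight_div_le (m : ℕ) :
    ∑ k ∈ range (m + 1), binomWeight m k / (k + 1) ≤ 1 / (m + 1) := by
  have hterm : ∀ k ∈ range (m + 1),
      binomWeight m k / (k + 1) = (m + 1).choose (k + 1) / (2 ^ (m + 1) * (m + 1)) := by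
    intro k _
    have hchoose : ((m : ℝ) + 1) * m.choose k = (m + 1).choose (k + 1) * ((k : ℝ) + 1) := by
      exact_mod_cast Nat.add_one_mul_choose_eq m k
    rw [binomWeight, div_div, div_eq_div_iff (by positivity) (by positivity)]
    linear_combination (2 : ℝ) ^ (m + 1) * hchoose
  have hsum : ∑ k ∈ range (m + 1), ((m + 1).choose (k + 1) : ℝ) ≤ 2 ^ (m + 1) := by
    have hrow := Nat.sum_range_choose (m + 1)
    rw [sum_range_succ'] at hrow
    exact_mod_cast (by omega : ∑ k ∈ range (m + 1), (m + 1).choose (k + 1) ≤ 2 ^ (m + 1))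
  rw [sum_congr rfl hterm, ← sum_div, div_le_div_iff₀ (by positivity) (by positivity)]
  nlinarith

lemma binomWeight_mul_sub_diagSignal (l h : ℝ) {m k : ℕ} (hk : k < m + 1) :
    binomWeight m k * (h - diagSignal l h m (k + 1))
      = binomWeight m (k + 1) * (diagSignal l h m (k + 1) - l) := by
  have hchoose : (m.choose (k + 1) : ℝ) * (k + 1) = m.choose k * (m - k) := by
    rw [← Nat.cast_sub (by omega : k ≤ m)]
    exact_mod_cast Nat.choose_succ_right_eq m k
  simp only [binomWeight, diagSignal]
  push_cast
  field_simp
  linear_combination (l - h) * hchoose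

section diagSignal

variable {l h : ℝ} {m : ℕ}

lemma diagSignal_nonneg (hl : 0 ≤ l) (hlh : l ≤ h) (j : ℕ) : 0 ≤ diagSignal l h m j := by
  unfold diagSignal
  have : 0 ≤ (h - l) * j / (m + 1) := by
    have : 0 ≤ h - l := by linarith
    positivity
  linarith

lemma diagSignal_le (hlh : l ≤ h) {j : ℕ} (hj : j ≤ m + 1) : diagSignal l h m j ≤ h := by
  have hj' : (j : ℝ) ≤ m + 1 := by exact_mod_cast hj
  have : (h - l) * j / (m + 1) ≤ h - l := by
    rw [div_le_iff₀ (by positivity)]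
    nlinarith
  unfold diagSignal
  linarith

lemma diagSignal_lt_succ (hlh : l < h) (k : ℕ) :
    diagSignal l h m k < diagSignal l h m (k + 1) := by
  unfold diagSignal
  push_cast
  gcongr
  · linarith

lemma one_sub_inv_le_diagSignal_div (hl : 0 ≤ l) (hlh : l < h) (k : ℕ) :
    1 - 1 / ((k : ℝ) + 1) ≤ diagSignal l h m k / diagSignal l h m (k + 1) := by
  have hpos : 0 < diagSignal l h m (k + 1) :=
    (diagSignal_nonneg hl hlh.le k).trans_lt (diagSignal_lt_succ hlh k)
  rw [le_div_iff₀ hpos]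
  unfold diagSignal
  push_cast
  field_simp
  nlinarith

end diagSignal

lemma pay_of_lt_left {v a b : ℝ} (hv : 0 ≤ v) (hab : a < b) (r : ℝ × ℝ) :
    pay v v r (b, a) = r.1 * (v * a / b) := by
  rcases hv.eq_or_lt with rfl | hv
  · simp [pay]
  · rw [pay, if_pos (mul_lt_mul_of_pos_left hab hv)]

lemma pay_of_lt_right {v a b : ℝ} (hv : 0 ≤ v) (hab : a < b) (r : ℝ × ℝ) :
    pay v v r (a, b) = r.2 * (v * a / b) := by
  rcases hv.eq_or_lt with rfl | hv
  · simp [pay]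
  · rw [pay, if_neg (mul_lt_mul_of_pos_left hab hv).not_gt,
      if_pos (mul_lt_mul_of_pos_left hab hv)]

def diagDispersion (l h : ℝ) (m : ℕ) : (ℝ × ℝ) × (ℝ × ℝ) →₀ ℝ :=
  ∑ k ∈ range (m + 1),
    (single ((h, l), (diagSignal l h m (k + 1), diagSignal l h m k)) (binomWeight m k) +
      single ((l, h), (diagSignal l h m k, diagSignal l h m (k + 1))) (binomWeight m k))

section diagDispersion

variable {l h : ℝ} {m : ℕ}

lemma finsum_diagDispersion_mul (φ : (ℝ × ℝ) × (ℝ × ℝ) → ℝ) :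
    ∑ᶠ p, diagDispersion l h m p * φ p
      = ∑ k ∈ range (m + 1), binomWeight m k *
          (φ ((h, l), (diagSignal l h m (k + 1), diagSignal l h m k)) +
            φ ((l, h), (diagSignal l h m k, diagSignal l h m (k + 1)))) :=
  finsum_sum_single_add_single_mul _ _ _ _ φ

lemma diagDispersion_nonneg : 0 ≤ diagDispersion l h m :=
  sum_nonneg fun k _ => add_nonneg (single_nonneg.2 (binomWeight_nonneg m k))
    (single_nonneg.2 (binomWeight_nonneg m k))

lemma inUnitSq_of_diagDispersion_ne_zero (hl : 0 ≤ l) (hlh : l ≤ h) (hh : h ≤ 1)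
    {p : (ℝ × ℝ) × (ℝ × ℝ)} (hp : diagDispersion l h m p ≠ 0) : InUnitSq p.2 := by
  obtain ⟨k, hk, hpk⟩ := mem_biUnion.1 (support_finsetSum (mem_support_iff.2 hp))
  have hk : k + 1 ≤ m + 1 := mem_range.1 hk
  have h0 := diagSignal_nonneg (m := m) hl hlh k
  have h1 := diagSignal_nonneg (m := m) hl hlh (k + 1)
  have h0' := (diagSignal_le (m := m) hlh (by omega : k ≤ m + 1)).trans hh
  have h1' := (diagSignal_le (m := m) hlh hk).trans hh
  rcases mem_union.1 (support_add hpk) with hpk | hpk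
  · rw [mem_singleton.1 (support_single_subset hpk)]
    exact ⟨h1, h1', h0, h0'⟩
  · rw [mem_singleton.1 (support_single_subset hpk)]
    exact ⟨h0, h0', h1, h1'⟩

lemma finsum_diagDispersion_apply_mk (hlh : l < h) (r : ℝ × ℝ) :
    ∑ᶠ s, diagDispersion l h m (r, s) = if r = (l, h) ∨ r = (h, l) then 1 / 2 else 0 := by
  rw [finsum_apply_mk_eq_finsum_mul_ite, finsum_diagDispersion_mul]
  by_cases h₁ : r = (l, h)
  · simp [h₁, hlh.ne, sum_binomWeight]
  by_cases h₂ : r = (h, l)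
  · simp [h₂, hlh.ne, sum_binomWeight]
  · simp [h₁, h₂, Ne.symm h₁, Ne.symm h₂]

lemma isInfoStructure_diagDispersion (hl : 0 ≤ l) (hlh : l < h) (hh : h ≤ 1) :
    IsInfoStructure (fun r => if r = (l, h) ∨ r = (h, l) then 1 / 2 else 0)
      (diagDispersion l h m) :=
  ⟨(diagDispersion l h m).hasFiniteSupport, fun p => diagDispersion_nonneg p,
    fun _ hp => inUnitSq_of_diagDispersion_ne_zero hl hlh.le hh hp,
    finsum_diagDispersion_apply_mk hlh⟩

lemma calibrated_diagDispersion : Calibrated (diagDispersion l h m) := by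
  have hbal : ∀ k < m + 1, binomWeight m k * (h - diagSignal l h m (k + 1))
      = binomWeight m (k + 1) * (diagSignal l h m (k + 1) - l) :=
    fun k hk => binomWeight_mul_sub_diagSignal l h hk
  have hc0 : diagSignal l h m 0 = l := by simp [diagSignal]
  have hwm : binomWeight m (m + 1) = 0 := by simp [binomWeight]
  intro c _ _
  simp_rw [← mul_ite_zero]
  rw [finsum_diagDispersion_mul, finsum_diagDispersion_mul]
  refine ⟨sum_range_balanced_eq_zero hc0 hwm hbal c, ?_⟩
  exact (sum_congr rfl fun k _ => by ring).trans (sum_range_balanced_eq_zero hc0 hwm hbal c)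

lemma rev_diagDispersion {v : ℝ} (hv : 0 ≤ v) (hlh : l < h) :
    Rev v v (diagDispersion l h m) = 2 * v * h * ∑ k ∈ range (m + 1),
      binomWeight m k * (diagSignal l h m k / diagSignal l h m (k + 1)) := by
  rw [Rev, finsum_diagDispersion_mul (fun p => pay v v p.1 p.2), Finset.mul_sum]
  refine sum_congr rfl fun k _ => ?_
  have hlt := diagSignal_lt_succ (m := m) hlh k
  rw [pay_of_lt_left hv hlt, pay_of_lt_right hv hlt]
  ring

lemma sub_le_rev_diagDispersion {v : ℝ} (hv : 0 ≤ v) (hl : 0 ≤ l) (hlh : l < h) :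
    v * h - 2 * v * h / (m + 1) ≤ Rev v v (diagDispersion l h m) := by
  have hratio : ∑ k ∈ range (m + 1), binomWeight m k * (1 - 1 / ((k : ℝ) + 1))
      ≤ ∑ k ∈ range (m + 1),
          binomWeight m k * (diagSignal l h m k / diagSignal l h m (k + 1)) :=
    sum_le_sum fun k _ => mul_le_mul_of_nonneg_left
      (one_sub_inv_le_diagSignal_div hl hlh k) (binomWeight_nonneg m k)
  have hloss : ∑ k ∈ range (m + 1), binomWeight m k * (1 - 1 / ((k : ℝ) + 1))
      = 1 / 2 - ∑ k ∈ range (m + 1), binomWeight m k / (k + 1) := by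
    rw [← sum_binomWeight m, ← sum_sub_distrib]
    exact sum_congr rfl fun k _ => by ring
  have hvh : 0 ≤ 2 * v * h := by nlinarith
  rw [rev_diagDispersion hv hlh]
  calc v * h - 2 * v * h / (m + 1) = 2 * v * h * (1 / 2 - 1 / (m + 1)) := by ring
    _ ≤ 2 * v * h * (1 / 2 - ∑ k ∈ range (m + 1), binomWeight m k / (k + 1)) := by
      gcongr; exact sum_binomWeight_div_le m
    _ ≤ _ := by gcongr; exact hloss ▸ hratio

end diagDispersion

/-- dispersion along the diagonal: with two equal-value bidders and
CTRs (l,h) or (h,l) with probability 1/2 each, calibrated information structures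
can extract revenue at least v·h − ε for every ε > 0. -/
theorem dispersion_along_the_diagonal
    (v l h : ℝ) (hv : 0 ≤ v) (hl : 0 ≤ l) (hlh : l < h) (hh : h ≤ 1)
    (g : ℝ × ℝ → ℝ)
    (hgdef : ∀ r, g r = if r = (l, h) ∨ r = (h, l) then 1/2 else 0)
    (ε : ℝ) (hε : 0 < ε) :
    ∃ x : (ℝ × ℝ) × (ℝ × ℝ) → ℝ,
      IsInfoStructure g x ∧ Calibrated x ∧ v * h - ε ≤ Rev v v x := by
  obtain rfl : g = _ := funext hgdef
  obtain ⟨m, hm⟩ := exists_nat_gt (2 * v / ε)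
  have hloss : 2 * v * h / (m + 1) ≤ ε := by
    rw [div_lt_iff₀ hε] at hm
    rw [div_le_iff₀ (by positivity)]
    nlinarith
  refine ⟨diagDispersion l h m, isInfoStructure_diagDispersion hl hlh hh,
    calibrated_diagDispersion, ?_⟩
  linarith [sub_le_rev_diagDispersion (m := m) hv hl hlh]
end
end

section
/- (High-low pairing.) Consider n ≥ 2 bidders with equal values v_i = v ≥ 0 for all i, and a prior g supported on exactly two CTR profiles r and r', each with probability 1/2, such that for two distinct bidders i, j one has r_i = r'_j > r_j = r'_i, and r_j ≥ r_k and r_j ≥ r'_k for every bidder k ∉ {i,j}. Then for every ε > 0 there exists a calibrated information structure x for g with Rev(x) ≥ v·r_i − ε. -/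
open scoped Classical

noncomputable section

/-- A finitely supported probability mass function on CTR vectors in [0,1]ⁿ. -/
def IsPriorN {n : ℕ} (g : (Fin n → ℝ) → ℝ) : Prop :=
  (Function.support g).Finite ∧ (∀ r, 0 ≤ g r) ∧
  (∀ r, g r ≠ 0 → ∀ i, 0 ≤ r i ∧ r i ≤ 1) ∧ (∑ᶠ r, g r) = 1

/-- An information structure for the prior `g`: finitely supported, nonnegative,
signals in [0,1]ⁿ, with `r`-marginal equal to `g`. -/
def IsInfoN {n : ℕ} (g : (Fin n → ℝ) → ℝ) (x : (Fin n → ℝ) × (Fin n → ℝ) → ℝ) : Prop :=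
  (Function.support x).Finite ∧ (∀ p, 0 ≤ x p) ∧
  (∀ p, x p ≠ 0 → ∀ i, 0 ≤ p.2 i ∧ p.2 i ≤ 1) ∧ (∀ r, (∑ᶠ s, x (r, s)) = g r)

/-- Calibration: the posterior mean of `rᵢ` given any signal value `c` of bidder `i`
equals `c`. -/
def CalibratedN {n : ℕ} (x : (Fin n → ℝ) × (Fin n → ℝ) → ℝ) : Prop :=
  ∀ i : Fin n, ∀ c : ℝ, 0 ≤ c → c ≤ 1 →
    (∑ᶠ p : (Fin n → ℝ) × (Fin n → ℝ), if p.2 i = c then x p * (p.1 i - c) else 0) = 0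

/-- The maximal value-weighted signal `max_j v_j s_j`. -/
def maxScore {n : ℕ} (v s : Fin n → ℝ) : ℝ := ⨆ i, v i * s i

/-- The set of winners `W(s) = {i : v_i s_i = max_j v_j s_j}`. -/
def winners {n : ℕ} (v s : Fin n → ℝ) : Finset (Fin n) :=
  Finset.univ.filter fun i => v i * s i = maxScore v s

/-- The highest competing value-weighted signal `max_{j ≠ i} v_j s_j`. -/
def maxOther {n : ℕ} (v s : Fin n → ℝ) (i : Fin n) : ℝ :=
  ⨆ j : {j : Fin n // j ≠ i}, v j.1 * s j.1

/-- Expected revenue of the click-through auction with uniform tie-breaking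
(division by zero is zero in Lean, matching the convention t/0 = 0). -/
def RevN {n : ℕ} (v : Fin n → ℝ) (x : (Fin n → ℝ) × (Fin n → ℝ) → ℝ) : ℝ :=
  ∑ᶠ p : (Fin n → ℝ) × (Fin n → ℝ), x p *
    (((winners v p.2).card : ℝ)⁻¹ *
      ∑ i ∈ winners v p.2, p.1 i * (maxOther v p.2 i / p.2 i))

/-!
Let `c 0 = r j < c 1 < ⋯ < c (N + 1) = r i` be equally spaced rungs and `w k = C(N, k) / 2^(N+1)`.
With weight `w k`, in state `r` bidder `i` is shown `c (k + 1)` and bidder `j` is shown `c k`;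
in state `r'` the roles of `i` and `j` are exchanged, and all other bidders learn their CTR.
A bidder shown the rung `c t` has true CTR `r i` with weight `w (t - 1)` and `r j` with weight
`w t`, and `C(N, t - 1) (N + 1 - t) = C(N, t) t` makes the posterior mean exactly `c t`.
The high bidder always wins, at price `v c k / c (k + 1)` per click, so the revenue is
`v r i E[c k / c (k + 1)] ≥ v r i E[k / (k + 1)] ≥ v r i (1 - 2 / (N + 1))`.
-/

open Finset

section PointMixture

variable {ι α : Type*}

def pointMixture (s : Finset ι) (w : ι → ℝ) (q : ι → α) (p : α) : ℝ :=
  ∑ k ∈ s, if p = q k then w k else 0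

variable (s : Finset ι) (w : ι → ℝ) (q : ι → α)

lemma pointMixture_nonneg (hw : ∀ k ∈ s, 0 ≤ w k) (p : α) : 0 ≤ pointMixture s w q p :=
  sum_nonneg fun k hk => by split_ifs <;> simp [hw k hk]

lemma support_pointMixture_subset : Function.support (pointMixture s w q) ⊆ q '' s := by
  intro p hp
  obtain ⟨k, hk, hne⟩ := exists_ne_zero_of_sum_ne_zero hp
  exact ⟨k, hk, (of_not_not fun h => hne (if_neg h)).symm⟩

lemma finsum_pointMixture_mul (h : α → ℝ) :
    ∑ᶠ p, pointMixture s w q p * h p = ∑ k ∈ s, w k * h (q k) := by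
  have hterm (k : ι) (p : α) :
      (if p = q k then w k else 0) * h p = if p = q k then w k * h (q k) else 0 := by
    split_ifs with hp <;> simp [hp]
  simp only [pointMixture, sum_mul, hterm]
  rw [finsum_sum_comm]
  · refine sum_congr rfl fun k _ => ?_
    rw [finsum_eq_single _ (q k) fun p hp => if_neg hp, if_pos rfl]
  · intro k _
    exact (Set.finite_singleton (q k)).subset fun p hp => of_not_not fun h => hp (if_neg h)

lemma pointMixture_prod_mk {β : Type*} (q : ι → α × β) (a : α) (b : β) :
    pointMixture s w q (a, b) =
      pointMixture {k ∈ s | (q k).1 = a} w (fun k => (q k).2) b := by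
  rw [pointMixture, pointMixture, sum_filter]
  refine sum_congr rfl fun k _ => ?_
  by_cases ha : (q k).1 = a <;> simp [ha, Prod.ext_iff, eq_comm]

lemma finsum_pointMixture_prod_mk {β : Type*} (q : ι → α × β) (a : α) :
    ∑ᶠ b, pointMixture s w q (a, b) = ∑ k ∈ s, if (q k).1 = a then w k else 0 := by
  simpa [pointMixture_prod_mk, sum_filter] using
    finsum_pointMixture_mul {k ∈ s | (q k).1 = a} w (fun k => (q k).2) 1

end PointMixture

section Auction

variable {n : ℕ}

lemma maxScore_eq_of_le {v s : Fin n → ℝ} {hi : Fin n} (h : ∀ l, v l * s l ≤ v hi * s hi) :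
    maxScore v s = v hi * s hi :=
  have : Nonempty (Fin n) := ⟨hi⟩
  le_antisymm (ciSup_le h) (le_ciSup (f := fun l => v l * s l) (Set.finite_range _).bddAbove hi)

lemma winners_eq_singleton {v s : Fin n → ℝ} {hi : Fin n}
    (h : ∀ l ≠ hi, v l * s l < v hi * s hi) : winners v s = {hi} := by
  have hmax : maxScore v s = v hi * s hi :=
    maxScore_eq_of_le fun l => by
      rcases eq_or_ne l hi with rfl | hl
      exacts [le_rfl, (h l hl).le]
  ext l
  simp only [winners, mem_filter, mem_univ, true_and, hmax, mem_singleton]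
  exact ⟨fun hl => by_contra fun hne => (h l hne).ne hl, fun hl => hl ▸ rfl⟩

lemma maxOther_eq_of_le {v s : Fin n → ℝ} {hi lo : Fin n} (hne : lo ≠ hi)
    (h : ∀ l ≠ hi, v l * s l ≤ v lo * s lo) : maxOther v s hi = v lo * s lo :=
  have : Nonempty {l : Fin n // l ≠ hi} := ⟨⟨lo, hne⟩⟩
  le_antisymm (ciSup_le fun l => h l l.2)
    (le_ciSup (f := fun l : {l : Fin n // l ≠ hi} => v l * s l) (Set.finite_range _).bddAbove
      ⟨lo, hne⟩)

lemma maxOther_zero (s : Fin n → ℝ) (hi : Fin n) : maxOther (fun _ => 0) s hi = 0 := by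
  simp [maxOther]

def clickRevenue (v t s : Fin n → ℝ) : ℝ :=
  ((winners v s).card : ℝ)⁻¹ * ∑ l ∈ winners v s, t l * (maxOther v s l / s l)

lemma revN_eq_finsum_clickRevenue (v : Fin n → ℝ) (x : (Fin n → ℝ) × (Fin n → ℝ) → ℝ) :
    RevN v x = ∑ᶠ p, x p * clickRevenue v p.1 p.2 := rfl

lemma clickRevenue_eq {v : ℝ} (hv : 0 ≤ v) (t : Fin n → ℝ) {s : Fin n → ℝ} {hi lo : Fin n}
    (hne : lo ≠ hi) (htop : ∀ l ≠ hi, s l < s hi) (hlo : ∀ l ≠ hi, s l ≤ s lo) :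
    clickRevenue (fun _ => v) t s = t hi * (v * s lo / s hi) := by
  rcases hv.eq_or_lt with rfl | hv
  · simp [clickRevenue, maxOther_zero]
  rw [clickRevenue, winners_eq_singleton fun l hl => mul_lt_mul_of_pos_left (htop l hl) hv,
    card_singleton, sum_singleton,
    maxOther_eq_of_le hne fun l hl => mul_le_mul_of_nonneg_left (hlo l hl) hv.le]
  simp

lemma clickRevenue_update_update {v : ℝ} (hv : 0 ≤ v) (t : Fin n → ℝ) {hi lo : Fin n}
    (hne : lo ≠ hi) {x y : ℝ} (hxy : y < x) (hrest : ∀ l, l ≠ hi → l ≠ lo → t l ≤ y) :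
    clickRevenue (fun _ => v) t (Function.update (Function.update t lo y) hi x) =
      t hi * (v * y / x) := by
  have hlo : ∀ l ≠ hi, Function.update (Function.update t lo y) hi x l ≤ y := by
    intro l hl
    rcases eq_or_ne l lo with rfl | hl'
    · simp [hl]
    · simp [hl, hl', hrest l hl hl']
  rw [clickRevenue_eq hv t hne (fun l hl => (hlo l hl).trans_lt (by simpa using hxy)) ?_]
  · simp [hne]
  · simpa [hne] using hlo

end Auction

section Ladder

def ladder (a b : ℝ) (N t : ℕ) : ℝ := b + t * ((a - b) / (N + 1))

def binomialWeight (N k : ℕ) : ℝ := N.choose k / 2 ^ (N + 1)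

lemma binomialWeight_nonneg (N k : ℕ) : 0 ≤ binomialWeight N k := by
  unfold binomialWeight
  positivity

lemma sum_binomialWeight (N : ℕ) : ∑ k ∈ range (N + 1), binomialWeight N k = 1 / 2 := by
  have h := Nat.sum_range_choose N
  simp only [binomialWeight, ← sum_div]
  rw [show (∑ k ∈ range (N + 1), (N.choose k : ℝ)) = 2 ^ N by exact_mod_cast h, pow_succ]
  field_simp

lemma sum_choose_mul_sub_eq_zero (N : ℕ) (φ : ℕ → ℝ) :
    ∑ k ∈ range (N + 1), (N.choose k : ℝ) * (φ (k + 1) * (N - k) - φ k * k) = 0 := by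
  set ψ : ℕ → ℝ := fun t => N.choose t * t * φ t
  have hstep : ∀ k ∈ range (N + 1),
      (N.choose k : ℝ) * (φ (k + 1) * (N - k) - φ k * k) = ψ (k + 1) - ψ k := by
    intro k hk
    have hkN : k ≤ N := Nat.lt_succ_iff.mp (mem_range.mp hk)
    have hcast : (N.choose (k + 1) : ℝ) * (k + 1) = N.choose k * (N - k) := by
      have := congrArg (Nat.cast : ℕ → ℝ) (Nat.choose_succ_right_eq N k)
      push_cast [Nat.cast_sub hkN] at this
      exact this
    simp only [ψ]
    push_cast
    linear_combination -(φ (k + 1)) * hcast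
  rw [sum_congr rfl hstep, sum_range_sub]
  simp [ψ]

lemma sum_binomialWeight_ladder_calibrated (a b : ℝ) (N : ℕ) (c : ℝ) :
    ∑ k ∈ range (N + 1), binomialWeight N k *
      ((if ladder a b N (k + 1) = c then a - c else 0) + (if ladder a b N k = c then b - c else 0))
      = 0 := by
  set φ : ℕ → ℝ := fun t => if ladder a b N t = c then 1 else 0
  have hφ (t : ℕ) (y : ℝ) :
      (if ladder a b N t = c then y - c else 0) = φ t * (y - ladder a b N t) := by
    simp only [φ]
    split_ifs with h
    · rw [h, one_mul]
    · rw [zero_mul]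
  set d := (a - b) / (N + 1)
  have hterm (k : ℕ) :
      binomialWeight N k *
        ((if ladder a b N (k + 1) = c then a - c else 0) + (if ladder a b N k = c then b - c else 0))
        = d / 2 ^ (N + 1) * ((N.choose k : ℝ) * (φ (k + 1) * (N - k) - φ k * k)) := by
    have hd : a = b + (N + 1) * d := by simp only [d]; field_simp; ring
    have hlad (t : ℕ) : ladder a b N t = b + t * d := rfl
    rw [hφ, hφ, hlad, hlad, binomialWeight, hd]
    push_cast
    ring
  simp only [hterm, ← mul_sum, sum_choose_mul_sub_eq_zero, mul_zero]

variable {a b : ℝ} {N : ℕ}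

lemma le_ladder (hab : b ≤ a) (t : ℕ) : b ≤ ladder a b N t := by
  have : 0 ≤ (t : ℝ) * ((a - b) / (N + 1)) := by
    have := sub_nonneg.mpr hab
    positivity
  simp only [ladder]
  linarith

lemma ladder_le (hab : b ≤ a) {t : ℕ} (ht : t ≤ N + 1) : ladder a b N t ≤ a := by
  have hd : 0 ≤ (a - b) / (N + 1) := div_nonneg (sub_nonneg.mpr hab) (by positivity)
  have ht' : (t : ℝ) ≤ N + 1 := by exact_mod_cast ht
  calc ladder a b N t ≤ b + (N + 1) * ((a - b) / (N + 1)) := by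
        simp only [ladder]; gcongr
    _ = a := by field_simp; ring

lemma ladder_lt_succ (hab : b < a) (k : ℕ) : ladder a b N k < ladder a b N (k + 1) := by
  have : 0 < (a - b) / (N + 1) := div_pos (sub_pos.mpr hab) (by positivity)
  simp only [ladder]
  push_cast
  linarith

lemma div_le_ladder_div_succ (hb : 0 ≤ b) (hab : b < a) (k : ℕ) :
    (k : ℝ) / (k + 1) ≤ ladder a b N k / ladder a b N (k + 1) := by
  set d := (a - b) / (N + 1)
  have hd : 0 < d := div_pos (sub_pos.mpr hab) (by positivity)
  have hsucc : ladder a b N (k + 1) = ladder a b N k + d := by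
    simp only [ladder, d]; push_cast; ring
  have hk : (k : ℝ) * d ≤ ladder a b N k := by simp only [ladder]; linarith
  have : 0 ≤ (k : ℝ) * d := by positivity
  rw [hsucc, div_le_div_iff₀ (by positivity) (by linarith)]
  nlinarith

lemma one_half_sub_le_sum_binomialWeight_mul (N : ℕ) :
    1 / 2 - 1 / (N + 1) ≤ ∑ k ∈ range (N + 1), binomialWeight N k * (k / (k + 1)) := by
  have hshift (k : ℕ) :
      binomialWeight N k * (k / (k + 1)) =
        binomialWeight N k - (N + 1).choose (k + 1) / ((N + 1) * 2 ^ (N + 1)) := by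
    have hcast : ((N : ℝ) + 1) * N.choose k = (N + 1).choose (k + 1) * (k + 1) := by
      exact_mod_cast Nat.add_one_mul_choose_eq N k
    simp only [binomialWeight]
    field_simp
    linear_combination -hcast
  have htail : ∑ k ∈ range (N + 1), ((N + 1).choose (k + 1) : ℝ) ≤ 2 ^ (N + 1) := by
    have h := Nat.sum_range_choose (N + 1)
    rw [sum_range_succ'] at h
    exact_mod_cast (Nat.le.intro h)
  have htail' : (∑ k ∈ range (N + 1), ((N + 1).choose (k + 1) : ℝ)) / ((N + 1) * 2 ^ (N + 1)) ≤
      1 / (N + 1) := by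
    rw [div_le_iff₀ (by positivity)]
    field_simp
    exact htail
  rw [sum_congr rfl fun k _ => hshift k, sum_sub_distrib, sum_binomialWeight, ← sum_div]
  linarith

end Ladder

section HighLowPairing

variable {n : ℕ} (r r' : Fin n → ℝ) (i j : Fin n) (N : ℕ)

def pairingAtom : ℕ × Bool → (Fin n → ℝ) × (Fin n → ℝ)
  | (k, true) => (r, Function.update (Function.update r j (ladder (r i) (r j) N k)) i
      (ladder (r i) (r j) N (k + 1)))
  | (k, false) => (r', Function.update (Function.update r' i (ladder (r i) (r j) N k)) j
      (ladder (r i) (r j) N (k + 1)))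

def highLowPairing : (Fin n → ℝ) × (Fin n → ℝ) → ℝ :=
  pointMixture (range (N + 1) ×ˢ univ) (fun k => binomialWeight N k.1) (pairingAtom r r' i j N)

lemma finsum_highLowPairing_mul (h : (Fin n → ℝ) × (Fin n → ℝ) → ℝ) :
    ∑ᶠ p, highLowPairing r r' i j N p * h p =
      ∑ k ∈ range (N + 1), binomialWeight N k *
        (h (pairingAtom r r' i j N (k, true)) + h (pairingAtom r r' i j N (k, false))) := by
  rw [highLowPairing, finsum_pointMixture_mul, sum_product]
  simp [mul_add, add_comm]

variable {r r' i j}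

lemma isInfoN_highLowPairing (hr : ∀ k, 0 ≤ r k ∧ r k ≤ 1) (hr' : ∀ k, 0 ≤ r' k ∧ r' k ≤ 1)
    (hji : r j ≤ r i) (hrr' : r ≠ r') {g : (Fin n → ℝ) → ℝ}
    (hg : ∀ w, g w = if w = r then 1 / 2 else if w = r' then 1 / 2 else 0) :
    IsInfoN g (highLowPairing r r' i j N) := by
  have hsupp := support_pointMixture_subset (range (N + 1) ×ˢ univ)
    (fun k => binomialWeight N k.1) (pairingAtom r r' i j N)
  refine ⟨((range (N + 1) ×ˢ univ).finite_toSet.image _).subset hsupp,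
    pointMixture_nonneg _ _ _ fun k _ => binomialWeight_nonneg N k.1, ?_, ?_⟩
  · intro p hp l
    obtain ⟨⟨k, b⟩, hk, rfl⟩ := hsupp hp
    have hrung : ∀ t ≤ N + 1, 0 ≤ ladder (r i) (r j) N t ∧ ladder (r i) (r j) N t ≤ 1 :=
      fun t ht => ⟨(hr j).1.trans (le_ladder hji t), (ladder_le hji ht).trans (hr i).2⟩
    have hkN : k + 1 ≤ N + 1 := mem_range.mp (mem_product.mp hk).1
    cases b <;> simp only [pairingAtom, Function.update_apply] <;> split_ifs
    all_goals first
      | exact hrung _ hkN | exact hrung _ (by omega) | exact hr l | exact hr' l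
  · intro r₀
    rw [highLowPairing, finsum_pointMixture_prod_mk, sum_product, hg]
    simp only [Fintype.sum_bool, pairingAtom]
    rcases eq_or_ne r₀ r with rfl | h
    · simp [hrr'.symm, sum_binomialWeight]
    rcases eq_or_ne r₀ r' with rfl | h'
    · simp [hrr', sum_binomialWeight]
    · simp [Ne.symm h, Ne.symm h', h, h']

lemma calibratedN_highLowPairing (hij : i ≠ j) (hswap1 : r i = r' j) (hswap2 : r j = r' i) :
    CalibratedN (highLowPairing r r' i j N) := by
  intro l c _ _
  have hpull (p : (Fin n → ℝ) × (Fin n → ℝ)) :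
      (if p.2 l = c then highLowPairing r r' i j N p * (p.1 l - c) else 0) =
        highLowPairing r r' i j N p * if p.2 l = c then p.1 l - c else 0 := by
    split_ifs <;> simp
  rw [finsum_congr hpull, finsum_highLowPairing_mul]
  rcases eq_or_ne l i with rfl | hli
  · simpa [pairingAtom, hij, ← hswap2] using sum_binomialWeight_ladder_calibrated (r l) (r j) N c
  rcases eq_or_ne l j with rfl | hlj
  · simpa [pairingAtom, hij, hij.symm, ← hswap1, add_comm] using
      sum_binomialWeight_ladder_calibrated (r i) (r l) N c
  · refine sum_eq_zero fun k _ => ?_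
    simp only [pairingAtom, Function.update_of_ne hli, Function.update_of_ne hlj]
    split_ifs with h1 h2 h2 <;> simp [h1, h2]

lemma le_revN_highLowPairing {v : ℝ} (hv : 0 ≤ v) (hij : i ≠ j) (hj : 0 ≤ r j)
    (hlt : r j < r i) (hswap1 : r i = r' j)
    (hdom : ∀ k, k ≠ i → k ≠ j → r k ≤ r j ∧ r' k ≤ r j) :
    v * r i * (1 - 2 / (N + 1)) ≤ RevN (fun _ => v) (highLowPairing r r' i j N) := by
  set c := ladder (r i) (r j) N
  have hvr : 0 ≤ 2 * (v * r i) := by have := hj.trans hlt.le; positivity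
  have hrest (k : ℕ) (l : Fin n) (hli : l ≠ i) (hlj : l ≠ j) : r l ≤ c k ∧ r' l ≤ c k :=
    have hc : r j ≤ c k := le_ladder hlt.le k
    ⟨(hdom l hli hlj).1.trans hc, (hdom l hli hlj).2.trans hc⟩
  have hatom (k : ℕ) :
      clickRevenue (fun _ => v) (pairingAtom r r' i j N (k, true)).1
          (pairingAtom r r' i j N (k, true)).2 +
        clickRevenue (fun _ => v) (pairingAtom r r' i j N (k, false)).1
          (pairingAtom r r' i j N (k, false)).2 =
      2 * (v * r i) * (c k / c (k + 1)) := by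
    rw [pairingAtom, pairingAtom,
      clickRevenue_update_update hv r hij.symm (ladder_lt_succ hlt k)
        fun l hli hlj => (hrest k l hli hlj).1,
      clickRevenue_update_update hv r' hij (ladder_lt_succ hlt k)
        fun l hlj hli => (hrest k l hli hlj).2, ← hswap1]
    ring
  rw [revN_eq_finsum_clickRevenue, finsum_highLowPairing_mul]
  simp only [hatom]
  calc v * r i * (1 - 2 / (N + 1))
      = 2 * (v * r i) * (1 / 2 - 1 / (N + 1)) := by ring
    _ ≤ 2 * (v * r i) * ∑ k ∈ range (N + 1), binomialWeight N k * (k / (k + 1)) :=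
      mul_le_mul_of_nonneg_left (one_half_sub_le_sum_binomialWeight_mul N) hvr
    _ ≤ ∑ k ∈ range (N + 1), binomialWeight N k * (2 * (v * r i) * (c k / c (k + 1))) := by
      rw [mul_sum]
      refine sum_le_sum fun k _ => ?_
      have := mul_le_mul_of_nonneg_left (div_le_ladder_div_succ (N := N) hj hlt k)
        (mul_nonneg hvr (binomialWeight_nonneg N k))
      linarith

end HighLowPairing

theorem high_low_pairing_general
    (n : ℕ) (v : ℝ) (hv : 0 ≤ v)
    (r r' : Fin n → ℝ) (i j : Fin n) (hij : i ≠ j)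
    (hr : ∀ k, 0 ≤ r k ∧ r k ≤ 1) (hr' : ∀ k, 0 ≤ r' k ∧ r' k ≤ 1)
    (hswap1 : r i = r' j) (hswap2 : r j = r' i) (hlt : r j < r i)
    (hdom : ∀ k, k ≠ i → k ≠ j → r k ≤ r j ∧ r' k ≤ r j)
    (g : (Fin n → ℝ) → ℝ)
    (hgdef : ∀ w, g w = if w = r then 1/2 else if w = r' then 1/2 else 0)
    (ε : ℝ) (hε : 0 < ε) :
    ∃ x : (Fin n → ℝ) × (Fin n → ℝ) → ℝ,
      IsInfoN g x ∧ CalibratedN x ∧ v * r i - ε ≤ RevN (fun _ => v) x := by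
  obtain ⟨N, hN⟩ := exists_nat_gt (2 * (v * r i) / ε)
  have hloss : 2 * (v * r i) / (N + 1) ≤ ε := by
    rw [div_lt_iff₀ hε] at hN
    rw [div_le_iff₀ (by positivity)]
    linarith
  have hrr' : r ≠ r' := fun h => hlt.ne (by rw [hswap2, ← h])
  refine ⟨highLowPairing r r' i j N, isInfoN_highLowPairing N hr hr' hlt.le hrr' hgdef,
    calibratedN_highLowPairing N hij hswap1 hswap2, ?_⟩
  calc v * r i - ε ≤ v * r i * (1 - 2 / (N + 1)) := by
        have : v * r i * (1 - 2 / (N + 1)) = v * r i - 2 * (v * r i) / (N + 1) := by ring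
        linarith
    _ ≤ RevN (fun _ => v) (highLowPairing r r' i j N) :=
        le_revN_highLowPairing N hv hij (hr j).1 hlt hswap1 hdom

/-- high-low pairing: with n equal-value bidders and a prior on two
profiles that swap bidders i and j (who dominate all others), calibrated
information structures can extract revenue at least v·rᵢ − ε. -/
theorem high_low_pairing
    (n : ℕ) (hn : 2 ≤ n) (v : ℝ) (hv : 0 ≤ v)
    (r r' : Fin n → ℝ) (i j : Fin n) (hij : i ≠ j)
    (hr : ∀ k, 0 ≤ r k ∧ r k ≤ 1) (hr' : ∀ k, 0 ≤ r' k ∧ r' k ≤ 1)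
    (hswap1 : r i = r' j) (hswap2 : r j = r' i) (hlt : r j < r i)
    (hdom : ∀ k, k ≠ i → k ≠ j → r k ≤ r j ∧ r' k ≤ r j)
    (g : (Fin n → ℝ) → ℝ)
    (hgdef : ∀ w, g w = if w = r then 1/2 else if w = r' then 1/2 else 0)
    (ε : ℝ) (hε : 0 < ε) :
    ∃ x : (Fin n → ℝ) × (Fin n → ℝ) → ℝ,
      IsInfoN g x ∧ CalibratedN x ∧ v * r i - ε ≤ RevN (fun _ => v) x :=
  high_low_pairing_general n v hv r r' i j hij hr hr' hswap1 hswap2 hlt hdom g hgdef ε hε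
end
end

section
/- (Full surplus extraction in symmetric environments.) Consider n ≥ 2 bidders with values v_i ≥ 0 and a prior g that is symmetric: for every permutation σ of {1,…,n} and every vector w ∈ ℝ^n, ∑_{r : (v_1·r_1,…,v_n·r_n) = w} g(r) = ∑_{r : (v_1·r_1,…,v_n·r_n) = (w_{σ(1)},…,w_{σ(n)})} g(r). Then for every ε > 0 there exists a calibrated information structure x for g with Rev(x) ≥ ∑_r g(r)·max_i v_i·r_i − ε; that is, revenue arbitrarily close to the full social surplus can be extracted. -/
open scoped Classical

noncomputable section

/-
Write `w = v * r` for the vector of scores. When one bidder `i` has a strictly highest score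
`a = wᵢ` above the second score `b`, the seller draws a runner-up `j` uniformly among the bidders
with score `b` and a rung `k ~ Bin(K, 1/2)` of the ladder `γₖ = b + (a - b) k / (K + 1)`, and
tells `i` the CTR `γₖ₊₁ / vᵢ` and `j` the CTR `γₖ / vⱼ`; everybody else (and everybody, when the
top is tied) learns the truth. Then `i` still wins and pays `γₖ` per unit of score, so the revenue
is `a · E[γₖ / γₖ₊₁] ≥ a · E[k / (k + 1)] ≥ a (1 - 2 / (K + 1))`.

Calibration rests on `C(K, k) (a - γₖ₊₁) = C(K, k + 1) (γₖ₊₁ - b)`: a level `γₘ` heard in the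
role of the top bidder (truth `a`) and in the role of the runner-up (truth `b`) is unbiased on
average, provided each bidder is equally likely to be in either role. Exchangeability of `w`
gives exactly this once the calibration sum is averaged over all relabellings of the bidders.
Exchangeability also moves the top score to any bidder, so every score is at most every value,
whence all signals lie in `[0, 1]`.
-/

namespace ClickAuction

open Finset Function Equiv

section Scores

variable {ι : Type*}

def IsStrictTop (w : ι → ℝ) (i : ι) : Prop := ∀ m ≠ i, w m < w i

def secondScore (w : ι → ℝ) (i : ι) : ℝ := ⨆ m : {m // m ≠ i}, w m

def runnersUp [Fintype ι] (w : ι → ℝ) (i : ι) : Finset ι := {m | w m = secondScore w i}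

variable {w : ι → ℝ} {i j m : ι}

lemma IsStrictTop.unique (hi : IsStrictTop w i) (hj : IsStrictTop w j) : i = j := by
  by_contra h
  exact lt_asymm (hi j (Ne.symm h)) (hj i h)

lemma IsStrictTop.iSup_eq [Finite ι] (hi : IsStrictTop w i) : ⨆ m, w m = w i := by
  have : Nonempty ι := ⟨i⟩
  refine le_antisymm (ciSup_le fun m => ?_) (le_ciSup (Finite.bddAbove_range w) i)
  rcases eq_or_ne m i with rfl | hm
  exacts [le_rfl, (hi m hm).le]

lemma isStrictTop_comp (σ : Perm ι) : IsStrictTop (w ∘ σ) i ↔ IsStrictTop w (σ i) := by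
  refine ⟨fun h m hm => ?_, fun h m hm => h (σ m) (σ.injective.ne hm)⟩
  simpa using h (σ.symm m) (by rwa [Ne, symm_apply_eq])

lemma le_secondScore [Finite ι] (hm : m ≠ i) : w m ≤ secondScore w i :=
  le_ciSup (Finite.bddAbove_range fun m : {m // m ≠ i} => w m) ⟨m, hm⟩

lemma secondScore_eq_of_le [Finite ι] {B : ℝ} (h : ∀ m ≠ i, w m ≤ B) (hj : j ≠ i)
    (hjB : w j = B) : secondScore w i = B :=
  have : Nonempty {m // m ≠ i} := ⟨⟨j, hj⟩⟩
  le_antisymm (ciSup_le fun m => h m m.2) (hjB ▸ le_secondScore hj)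

lemma exists_eq_secondScore [Finite ι] [Nontrivial ι] (w : ι → ℝ) (i : ι) :
    ∃ j ≠ i, w j = secondScore w i := by
  obtain ⟨j, hj⟩ := exists_ne i
  have : Nonempty {m // m ≠ i} := ⟨⟨j, hj⟩⟩
  obtain ⟨⟨j, hj⟩, hmax⟩ := Finite.exists_max fun m : {m // m ≠ i} => w m
  exact ⟨j, hj, (secondScore_eq_of_le (fun m hm => hmax ⟨m, hm⟩) hj rfl).symm⟩

lemma IsStrictTop.secondScore_lt [Finite ι] [Nontrivial ι] (hi : IsStrictTop w i) :
    secondScore w i < w i := by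
  obtain ⟨j, hj, hjs⟩ := exists_eq_secondScore w i
  exact hjs ▸ hi j hj

lemma secondScore_nonneg [Finite ι] [Nontrivial ι] (hw : 0 ≤ w) (i : ι) :
    0 ≤ secondScore w i := by
  obtain ⟨j, -, hjs⟩ := exists_eq_secondScore w i
  exact hjs ▸ hw j

lemma secondScore_comp (σ : Perm ι) (w : ι → ℝ) (i : ι) :
    secondScore (w ∘ σ) i = secondScore w (σ i) :=
  (σ.subtypeEquiv (p := (· ≠ i)) fun _ => σ.injective.ne_iff.symm).iSup_comp
    (g := fun m : {m // m ≠ σ i} => w m)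

lemma runnersUp_nonempty [Fintype ι] [Nontrivial ι] (w : ι → ℝ) (i : ι) :
    (runnersUp w i).Nonempty := by
  obtain ⟨j, -, hj⟩ := exists_eq_secondScore w i
  exact ⟨j, by simpa [runnersUp] using hj⟩

lemma ne_of_mem_runnersUp [Fintype ι] [Nontrivial ι] (hi : IsStrictTop w i)
    (hj : j ∈ runnersUp w i) : j ≠ i := by
  rintro rfl
  exact hi.secondScore_lt.ne' (mem_filter.1 hj).2

lemma mem_runnersUp_comp [Fintype ι] (σ : Perm ι) :
    m ∈ runnersUp (w ∘ σ) i ↔ σ m ∈ runnersUp w (σ i) := by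
  simp [runnersUp, secondScore_comp]

lemma card_runnersUp_comp [Fintype ι] (σ : Perm ι) (w : ι → ℝ) (i : ι) :
    #(runnersUp (w ∘ σ) i) = #(runnersUp w (σ i)) :=
  card_equiv σ fun _ => mem_runnersUp_comp σ

end Scores

section LadderLevel

def ladderLevel (a b : ℝ) (K k : ℕ) : ℝ := b + (a - b) * k / (K + 1)

variable {a b : ℝ} {K k : ℕ}

@[simp] lemma ladderLevel_zero : ladderLevel a b K 0 = b := by simp [ladderLevel]

@[simp] lemma ladderLevel_succ_self : ladderLevel a b K (K + 1) = a := by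
  rw [ladderLevel]; push_cast; field_simp; ring

lemma ladderLevel_succ : ladderLevel a b K (k + 1) = ladderLevel a b K k + (a - b) / (K + 1) := by
  simp only [ladderLevel]; push_cast; ring

lemma le_ladderLevel (hab : b ≤ a) : b ≤ ladderLevel a b K k := by
  have : 0 ≤ (a - b) * k / (K + 1) := by have := sub_nonneg.2 hab; positivity
  simp only [ladderLevel]; linarith

lemma ladderLevel_le (hab : b ≤ a) (hk : k ≤ K + 1) : ladderLevel a b K k ≤ a := by
  have hk' : (k : ℝ) ≤ K + 1 := by exact_mod_cast hk
  have : (a - b) * k / (K + 1) ≤ a - b := by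
    rw [div_le_iff₀ (by positivity)]; nlinarith
  simp only [ladderLevel]; linarith

lemma ladderLevel_lt_succ (hab : b < a) : ladderLevel a b K k < ladderLevel a b K (k + 1) := by
  rw [ladderLevel_succ]
  linarith [div_pos (sub_pos.2 hab) (by positivity : (0 : ℝ) < K + 1)]

lemma div_le_ladderLevel_div (hb : 0 ≤ b) (hab : b < a) :
    (k : ℝ) / (k + 1) ≤ ladderLevel a b K k / ladderLevel a b K (k + 1) := by
  have hpos : 0 < ladderLevel a b K (k + 1) :=
    hb.trans_lt ((le_ladderLevel hab.le).trans_lt (ladderLevel_lt_succ hab))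
  rw [div_le_div_iff₀ (by positivity) hpos, ladderLevel_succ]
  have : ladderLevel a b K k = b + k * ((a - b) / (K + 1)) := by simp only [ladderLevel]; ring
  rw [this]
  -- `(k + 1) γₖ - k γₖ₊₁ = b`
  nlinarith

lemma choose_mul_sub_ladderLevel_add (hk : k < K) :
    (K.choose k : ℝ) * (a - ladderLevel a b K (k + 1))
      + K.choose (k + 1) * (b - ladderLevel a b K (k + 1)) = 0 := by
  have hchoose : ((K.choose (k + 1) * (k + 1) : ℕ) : ℝ) = ((K.choose k * (K - k) : ℕ) : ℝ) := by
    rw [Nat.choose_succ_right_eq]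
  push_cast [Nat.cast_sub hk.le] at hchoose
  simp only [ladderLevel]
  push_cast
  field_simp
  linear_combination (b - a) * hchoose

lemma sum_choose_mul_ladderLevel (φ : ℝ → ℝ) :
    ∑ k ∈ range (K + 1), (K.choose k : ℝ) *
      (φ (ladderLevel a b K (k + 1)) * (a - ladderLevel a b K (k + 1))
        + φ (ladderLevel a b K k) * (b - ladderLevel a b K k)) = 0 := by
  simp only [mul_add, sum_add_distrib]
  rw [sum_range_succ, sum_range_succ']
  simp only [ladderLevel_succ_self, ladderLevel_zero, sub_self, mul_zero, add_zero,
    ← sum_add_distrib]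
  refine sum_eq_zero fun k hk => ?_
  linear_combination φ (ladderLevel a b K (k + 1)) *
    choose_mul_sub_ladderLevel_add (a := a) (b := b) (mem_range.1 hk)

end LadderLevel

lemma sum_choose_div_two_pow (K : ℕ) : ∑ k ∈ range (K + 1), (K.choose k : ℝ) / 2 ^ K = 1 := by
  rw [← sum_div, div_eq_one_iff_eq (by positivity)]
  exact_mod_cast Nat.sum_range_choose K

lemma one_sub_two_div_le_sum_choose_mul (K : ℕ) :
    1 - 2 / (K + 1 : ℝ) ≤ ∑ k ∈ range (K + 1), (K.choose k : ℝ) / 2 ^ K * (k / (k + 1)) := by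
  have hsucc : ∑ k ∈ range (K + 1), ((K + 1).choose (k + 1) : ℝ) ≤ 2 ^ (K + 1) := by
    have := Nat.sum_range_choose (K + 1)
    rw [sum_range_succ'] at this
    exact_mod_cast (by omega : ∑ k ∈ range (K + 1), (K + 1).choose (k + 1) ≤ 2 ^ (K + 1))
  have hterm : ∀ k : ℕ, (K.choose k : ℝ) / 2 ^ K * (k / (k + 1))
      = K.choose k / 2 ^ K - (K + 1).choose (k + 1) / ((K + 1) * 2 ^ K) := by
    intro k
    have hC : ((K + 1).choose (k + 1) : ℝ) = (K + 1) * K.choose k / (k + 1) := by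
      rw [eq_div_iff (by positivity)]
      exact_mod_cast (Nat.add_one_mul_choose_eq K k).symm
    rw [hC]
    field_simp
    ring
  calc 1 - 2 / (K + 1 : ℝ) = 1 - 2 ^ (K + 1) / ((K + 1) * 2 ^ K) := by
        rw [pow_succ]; field_simp
    _ ≤ 1 - (∑ k ∈ range (K + 1), ((K + 1).choose (k + 1) : ℝ)) / ((K + 1) * 2 ^ K) := by
        gcongr
    _ = _ := by
        rw [sum_congr rfl fun k _ => hterm k, sum_sub_distrib, sum_choose_div_two_pow, ← sum_div]

section Exchangeable

lemma sum_perm_apply_eq_zero {ι : Type*} [Fintype ι] {h : ι → ℝ} (h0 : ∑ m, h m = 0) (ℓ : ι) :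
    ∑ σ : Perm ι, h (σ ℓ) = 0 := by
  have hmove : ∀ m, ∑ σ : Perm ι, h (σ ℓ) = ∑ σ : Perm ι, h (σ m) := fun m => by
    rw [← Equiv.sum_comp (Equiv.mulRight (swap ℓ m)) fun σ => h (σ ℓ)]
    simp [Perm.mul_apply]
  have hcard : (Fintype.card ι : ℝ) * ∑ σ : Perm ι, h (σ ℓ) = 0 :=
    calc (Fintype.card ι : ℝ) * ∑ σ : Perm ι, h (σ ℓ) = ∑ m : ι, ∑ σ : Perm ι, h (σ m) := by
          simp [← hmove]
      _ = ∑ σ : Perm ι, ∑ m, h (σ m) := sum_comm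
      _ = 0 := by simp [Equiv.sum_comp, h0]
  have : Nonempty ι := ⟨ℓ⟩
  exact (mul_eq_zero.1 hcard).resolve_left (by positivity)

variable {α ι : Type*} [Fintype ι] {g : α → ℝ} {f : α → ι → ℝ}

def IsExchangeable (g : α → ℝ) (f : α → ι → ℝ) : Prop :=
  ∀ (σ : Perm ι) (w : ι → ℝ),
    (∑ᶠ a, if f a = w then g a else 0) = ∑ᶠ a, if f a = w ∘ σ then g a else 0

lemma finsum_mul_comp_eq_finsum_fiber (hg : (support g).Finite) (Φ : (ι → ℝ) → ℝ) :
    ∑ᶠ a, g a * Φ (f a) = ∑ᶠ w, (∑ᶠ a, if f a = w then g a else 0) * Φ w := by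
  have hS : ∀ {h : α → ℝ}, (∀ a, g a = 0 → h a = 0) → support h ⊆ hg.toFinset :=
    fun hh a ha => by simpa using fun h0 => ha (hh a h0)
  have hfiber : ∀ w, (∑ᶠ a, if f a = w then g a else 0)
      = ∑ a ∈ hg.toFinset, if f a = w then g a else 0 := fun w =>
    finsum_eq_sum_of_support_subset _ (hS fun a h0 => by simp [h0])
  rw [finsum_eq_sum_of_support_subset _ (hS fun a h0 => by simp [h0])]
  simp_rw [hfiber, sum_mul]
  rw [finsum_sum_comm]
  · refine sum_congr rfl fun a _ => ?_
    rw [finsum_eq_single _ (f a) fun w hw => by simp [Ne.symm hw]]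
    simp
  · exact fun a _ => (Set.finite_singleton (f a)).subset fun w hw => by
      by_contra h; exact hw (by simp [Ne.symm h])

lemma finsum_mul_comp_perm (hg : (support g).Finite) (hsym : IsExchangeable g f)
    (Φ : (ι → ℝ) → ℝ) (σ : Perm ι) : ∑ᶠ a, g a * Φ (f a ∘ σ) = ∑ᶠ a, g a * Φ (f a) := by
  rw [show ∑ᶠ a, g a * Φ (f a ∘ σ) = _ from finsum_mul_comp_eq_finsum_fiber hg (Φ <| · ∘ σ),
    finsum_mul_comp_eq_finsum_fiber hg Φ]
  calc ∑ᶠ w, (∑ᶠ a, if f a = w then g a else 0) * Φ (w ∘ σ)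
      = ∑ᶠ w, (∑ᶠ a, if f a = w ∘ σ then g a else 0) * Φ (w ∘ σ) :=
        finsum_congr fun w => by rw [hsym σ w]
    _ = ∑ᶠ w, (∑ᶠ a, if f a = w then g a else 0) * Φ w :=
        finsum_comp_equiv (f := fun w => (∑ᶠ a, if f a = w then g a else 0) * Φ w)
          (σ.symm.arrowCongr (Equiv.refl ℝ))

lemma finsum_mul_eq_zero_of_sum_perm (hg : (support g).Finite) (hsym : IsExchangeable g f)
    {Φ : (ι → ℝ) → ℝ} (hΦ : ∀ w, ∑ σ : Perm ι, Φ (w ∘ σ) = 0) : ∑ᶠ a, g a * Φ (f a) = 0 := by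
  have hcard : (Fintype.card (Perm ι) : ℝ) * ∑ᶠ a, g a * Φ (f a) = 0 :=
    calc (Fintype.card (Perm ι) : ℝ) * ∑ᶠ a, g a * Φ (f a)
        = ∑ σ : Perm ι, ∑ᶠ a, g a * Φ (f a ∘ σ) := by simp [finsum_mul_comp_perm hg hsym]
      _ = ∑ᶠ a, ∑ σ : Perm ι, g a * Φ (f a ∘ σ) :=
          (finsum_sum_comm _ _ fun σ _ => hg.subset (support_mul_subset_left _ _)).symm
      _ = 0 := by simp [← mul_sum, hΦ]
  exact (mul_eq_zero.1 hcard).resolve_left (Nat.cast_ne_zero.2 Fintype.card_ne_zero)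

lemma IsExchangeable.comp_perm (hg0 : ∀ a, 0 ≤ g a) (hg : (support g).Finite)
    (hsym : IsExchangeable g f) {P : (ι → ℝ) → Prop} (hP : ∀ a, g a ≠ 0 → P (f a))
    (σ : Perm ι) {a : α} (ha : g a ≠ 0) : P (f a ∘ σ) := by
  by_contra hna
  have hzero : ∑ᶠ b, g b * (if P (f b) then 0 else 1) = 0 :=
    finsum_eq_zero_of_forall_eq_zero fun b => by
      by_cases hb : g b = 0 <;> simp [hb, hP]
  have hle := single_le_finsum a (hg.subset (support_mul_subset_left _ _)) fun b =>
    mul_nonneg (hg0 b) (by split_ifs <;> norm_num : (0 : ℝ) ≤ if P (f b ∘ σ) then 0 else 1)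
  rw [if_neg hna, mul_one, finsum_mul_comp_perm hg hsym (fun w => if P w then 0 else 1),
    hzero] at hle
  exact ha (le_antisymm hle (hg0 a))

end Exchangeable

section Mixture

variable {α β τ : Type*}

lemma finsum_single_mul (b : β) (c : ℝ) (F : β → ℝ) :
    ∑ᶠ s, Finsupp.single b c s * F s = c * F b := by
  rw [finsum_eq_single _ b fun s hs => by simp [Finsupp.single_eq_of_ne hs]]
  simp

lemma finsum_sum_single_mul (T : Finset τ) (e : τ → β) (p : τ → ℝ) (F : β → ℝ) :
    ∑ᶠ s, (∑ t ∈ T, Finsupp.single (e t) (p t)) s * F s = ∑ t ∈ T, p t * F (e t) := by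
  simp_rw [Finsupp.finsetSum_apply, sum_mul]
  rw [finsum_sum_comm _ _ fun t _ => (Finsupp.single (e t) (p t)).hasFiniteSupport.subset
    (support_mul_subset_left _ _)]
  exact sum_congr rfl fun t _ => finsum_single_mul _ _ _

lemma finite_support_compProd {g : α → ℝ} (hg : (support g).Finite) (κ : α → β →₀ ℝ) :
    (support fun p : α × β => g p.1 * κ p.1 p.2).Finite :=
  (hg.prod (hg.biUnion fun a _ => (κ a).hasFiniteSupport)).subset fun _ hp =>
    ⟨left_ne_zero_of_mul hp, Set.mem_biUnion (left_ne_zero_of_mul hp) (right_ne_zero_of_mul hp)⟩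

lemma finsum_compProd_mul {g : α → ℝ} (hg : (support g).Finite) (κ : α → β →₀ ℝ)
    (F : α × β → ℝ) :
    ∑ᶠ p : α × β, g p.1 * κ p.1 p.2 * F p = ∑ᶠ a, g a * ∑ᶠ b, κ a b * F (a, b) := by
  rw [finsum_curry _ (finite_support_compProd hg κ |>.subset (support_mul_subset_left _ _))]
  simp_rw [mul_finsum, mul_assoc]

lemma sum_product_range_div_card {J : Finset α} (hJ : J.Nonempty) (K : ℕ) (c : ℕ → ℝ) :
    ∑ t ∈ J ×ˢ range (K + 1), c t.2 / #J = ∑ k ∈ range (K + 1), c k := by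
  rw [sum_product, sum_comm]
  refine sum_congr rfl fun k _ => ?_
  simp only [sum_const, nsmul_eq_mul]
  exact mul_div_cancel₀ _ (Nat.cast_ne_zero.2 hJ.card_ne_zero)

end Mixture

section Auction

variable {n : ℕ} {v r s : Fin n → ℝ} {i : Fin n}

def clickRevenue (v r s : Fin n → ℝ) : ℝ :=
  ((winners v s).card : ℝ)⁻¹ * ∑ i ∈ winners v s, r i * (maxOther v s i / s i)

lemma winners_eq_singleton (h : IsStrictTop (v * s) i) : winners v s = {i} := by
  have hmax : maxScore v s = v i * s i := h.iSup_eq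
  ext m
  simp only [winners, mem_filter, mem_univ, true_and, mem_singleton, hmax]
  exact ⟨fun hm => by_contra fun hne => (h m hne).ne hm, fun hm => hm ▸ rfl⟩

lemma clickRevenue_of_isStrictTop (h : IsStrictTop (v * s) i) :
    clickRevenue v r s = r i * (secondScore (v * s) i / s i) := by
  simp [clickRevenue, winners_eq_singleton h, maxOther, secondScore]

lemma clickRevenue_self_of_forall_not_isStrictTop [Nonempty (Fin n)]
    (h : ∀ i, ¬IsStrictTop (v * r) i) : clickRevenue v r r = ⨆ i, v i * r i := by
  set M := ⨆ i, v i * r i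
  have hle : ∀ m, v m * r m ≤ M := le_ciSup (Finite.bddAbove_range fun i => v i * r i)
  have hterm : ∀ m ∈ winners v r, r m * (maxOther v r m / r m) = M := by
    intro m hm
    have hmM : v m * r m = M := (mem_filter.1 hm).2
    obtain ⟨m', hm', hge⟩ : ∃ m' ≠ m, v m * r m ≤ v m' * r m' := by
      simpa [IsStrictTop] using h m
    have hother : maxOther v r m = M := secondScore_eq_of_le (w := v * r)
      (fun m'' _ => hle m'') hm' (le_antisymm (hle m') (hmM ▸ hge))
    rcases eq_or_ne (r m) 0 with h0 | h0
    · simp [← hmM, h0]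
    · rw [hother, mul_div_cancel₀ _ h0]
  obtain ⟨i, hi⟩ := Finite.exists_max fun i => v i * r i
  have hwin : i ∈ winners v r := mem_filter.2 ⟨mem_univ _, le_antisymm (hle i) (ciSup_le hi)⟩
  rw [clickRevenue, sum_congr rfl hterm, sum_const, nsmul_eq_mul,
    inv_mul_cancel_left₀ (Nat.cast_ne_zero.2 (card_ne_zero_of_mem hwin))]

end Auction

section LadderSignal

variable {ι : Type*}

abbrev rung (w : ι → ℝ) (i : ι) (K k : ℕ) : ℝ := ladderLevel (w i) (secondScore w i) K k

def ladderSignal (v r : ι → ℝ) (K : ℕ) (i j : ι) (k : ℕ) : ι → ℝ :=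
  update (update r j (rung (v * r) i K k / v j)) i (rung (v * r) i K (k + 1) / v i)

variable {w v r : ι → ℝ} {i j : ι} {K k : ℕ}

lemma pos_of_isStrictTop [Finite ι] [Nontrivial ι] (hw : 0 ≤ v * r)
    (hcap : ∀ m m', (v * r) m' ≤ v m) (hi : IsStrictTop (v * r) i) (m : ι) : 0 < v m :=
  ((secondScore_nonneg hw i).trans_lt hi.secondScore_lt).trans_le (hcap m i)

lemma mul_ladderSignal (hvi : v i ≠ 0) (hvj : v j ≠ 0) :
    v * ladderSignal v r K i j k
      = update (update (v * r) j (rung (v * r) i K k)) i (rung (v * r) i K (k + 1)) := by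
  ext m
  simp only [ladderSignal, Pi.mul_apply, update_apply]
  split_ifs with hmi hmj <;> [rw [hmi]; rw [hmj]; skip] <;> field_simp

lemma update_rung_le [Finite ι] [Nontrivial ι] (hi : IsStrictTop w i) {m : ι} (hm : m ≠ i) :
    update (update w j (rung w i K k)) i (rung w i K (k + 1)) m ≤ rung w i K k := by
  rw [update_of_ne hm, update_apply]
  split_ifs
  · rfl
  · exact (le_secondScore hm).trans (le_ladderLevel hi.secondScore_lt.le)

lemma isStrictTop_update_rung [Finite ι] [Nontrivial ι] (hi : IsStrictTop w i) :
    IsStrictTop (update (update w j (rung w i K k)) i (rung w i K (k + 1))) i := fun m hm => by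
  rw [update_self]
  exact (update_rung_le hi hm).trans_lt (ladderLevel_lt_succ hi.secondScore_lt)

lemma secondScore_update_rung [Fintype ι] [Nontrivial ι] (hi : IsStrictTop w i)
    (hj : j ∈ runnersUp w i) :
    secondScore (update (update w j (rung w i K k)) i (rung w i K (k + 1))) i = rung w i K k :=
  secondScore_eq_of_le (fun _ hm => update_rung_le hi hm) (ne_of_mem_runnersUp hi hj)
    (by rw [update_of_ne (ne_of_mem_runnersUp hi hj), update_self])

lemma ladderSignal_mem_Icc [Finite ι] [Nontrivial ι] (hr : ∀ m, r m ∈ Set.Icc 0 1)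
    (hw : 0 ≤ v * r) (hcap : ∀ m m', (v * r) m' ≤ v m) (hi : IsStrictTop (v * r) i)
    (hk : k ≤ K) (m : ι) : ladderSignal v r K i j k m ∈ Set.Icc 0 1 := by
  have hrung : ∀ k' ≤ K + 1, ∀ m', rung (v * r) i K k' / v m' ∈ Set.Icc 0 1 := fun k' hk' m' => by
    have hvm := pos_of_isStrictTop hw hcap hi m'
    exact ⟨div_nonneg ((secondScore_nonneg hw i).trans (le_ladderLevel hi.secondScore_lt.le))
      hvm.le, (div_le_one hvm).2 ((ladderLevel_le hi.secondScore_lt.le hk').trans (hcap m' i))⟩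
  simp only [ladderSignal, update_apply]
  split_ifs
  exacts [hrung _ (by omega) _, hrung _ (by omega) _, hr m]

/-- The test `[s = c] (r - c)` of calibration, rewritten in score units `x = V s`, `y = V r`. -/
def scoreTest (V c x : ℝ) : ℝ := if x / V = c then V⁻¹ else 0

lemma ite_div_sub_eq_scoreTest_mul {V c x y : ℝ} (hV : V ≠ 0) :
    (if x / V = c then y / V - c else 0) = scoreTest V c x * (y - x) := by
  rw [scoreTest]
  split_ifs with h
  · rw [← h]; field_simp
  · rw [zero_mul]

lemma ladderSignal_calibration [Fintype ι] [Nontrivial ι] (hw : 0 ≤ v * r)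
    (hcap : ∀ m m', (v * r) m' ≤ v m) (hi : IsStrictTop (v * r) i) (hj : j ∈ runnersUp (v * r) i)
    (ℓ : ι) (c : ℝ) :
    (if ladderSignal v r K i j k ℓ = c then r ℓ - c else 0)
      = (if ℓ = i then scoreTest (v ℓ) c (rung (v * r) i K (k + 1))
            * ((v * r) i - rung (v * r) i K (k + 1)) else 0)
        + (if ℓ = j then scoreTest (v ℓ) c (rung (v * r) i K k)
            * (secondScore (v * r) i - rung (v * r) i K k) else 0) := by
  have hvℓ := (pos_of_isStrictTop hw hcap hi ℓ).ne'
  have hrℓ : r ℓ = (v * r) ℓ / v ℓ := by rw [Pi.mul_apply, mul_div_cancel_left₀ _ hvℓ]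
  have hji := ne_of_mem_runnersUp hi hj
  by_cases hℓi : ℓ = i
  · subst hℓi
    rw [ladderSignal, update_self, if_pos rfl, if_neg hji.symm, add_zero, hrℓ,
      ite_div_sub_eq_scoreTest_mul hvℓ]
  by_cases hℓj : ℓ = j
  · subst hℓj
    rw [ladderSignal, update_of_ne hℓi, update_self, if_neg hℓi, if_pos rfl, zero_add, hrℓ,
      ite_div_sub_eq_scoreTest_mul hvℓ, (mem_filter.1 hj).2]
  · rw [ladderSignal, update_of_ne hℓi, update_of_ne hℓj, if_neg hℓi, if_neg hℓj, add_zero]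
    split_ifs with h <;> simp [h]

end LadderSignal

lemma clickRevenue_ladderSignal {n : ℕ} [Nontrivial (Fin n)] {v r : Fin n → ℝ} {i j : Fin n}
    {K k : ℕ} (hw : 0 ≤ v * r) (hcap : ∀ m m', (v * r) m' ≤ v m) (hi : IsStrictTop (v * r) i)
    (hj : j ∈ runnersUp (v * r) i) :
    clickRevenue v r (ladderSignal v r K i j k)
      = (v * r) i * rung (v * r) i K k / rung (v * r) i K (k + 1) := by
  have hv := pos_of_isStrictTop hw hcap hi
  have hs := mul_ladderSignal (r := r) (K := K) (k := k) (hv i).ne' (hv j).ne'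
  rw [clickRevenue_of_isStrictTop (i := i) (hs ▸ isStrictTop_update_rung hi), hs,
    secondScore_update_rung hi hj]
  simp only [ladderSignal, update_self, Pi.mul_apply]
  rw [div_div_eq_mul_div]
  ring

section Kernel

variable {ι : Type*} [Fintype ι]

def ladderKernel (v r : ι → ℝ) (K : ℕ) (i : ι) : (ι → ℝ) →₀ ℝ :=
  ∑ t ∈ runnersUp (v * r) i ×ˢ range (K + 1), Finsupp.single (ladderSignal v r K i t.1 t.2)
    ((K.choose t.2 : ℝ) / 2 ^ K / #(runnersUp (v * r) i))

def signalKernel (v : ι → ℝ) (K : ℕ) (r : ι → ℝ) : (ι → ℝ) →₀ ℝ :=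
  if h : ∃ i, IsStrictTop (v * r) i then ladderKernel v r K h.choose else Finsupp.single r 1

/-- The contribution of the ladder at the strict top `i` of `w` to the calibration sum of the
bidder `m`, for a test function `φ` of the announced score; it depends on `w` only. -/
def ladderGap (φ : ℝ → ℝ) (K : ℕ) (w : ι → ℝ) (i m : ι) : ℝ :=
  ∑ t ∈ runnersUp w i ×ˢ range (K + 1), (K.choose t.2 : ℝ) / 2 ^ K / #(runnersUp w i) *
    ((if m = i then φ (rung w i K (t.2 + 1)) * (w i - rung w i K (t.2 + 1)) else 0)
      + (if m = t.1 then φ (rung w i K t.2) * (secondScore w i - rung w i K t.2) else 0))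

def calibrationGap (φ : ℝ → ℝ) (K : ℕ) (w : ι → ℝ) (m : ι) : ℝ :=
  ∑ i, if IsStrictTop w i then ladderGap φ K w i m else 0

variable {φ : ℝ → ℝ} {v r : ι → ℝ} {K : ℕ}

lemma ladderGap_comp (σ : Perm ι) (w : ι → ℝ) (i m : ι) :
    ladderGap φ K (w ∘ σ) i m = ladderGap φ K w (σ i) (σ m) := by
  simp only [ladderGap, rung, comp_apply, secondScore_comp, card_runnersUp_comp,
    σ.injective.eq_iff]
  refine sum_equiv (σ.prodCongr (Equiv.refl ℕ)) (fun t => ?_) fun t _ => ?_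
  · simp [mem_runnersUp_comp]
  · simp [σ.injective.eq_iff]

lemma sum_ladderGap [Nontrivial ι] (w : ι → ℝ) (i : ι) : ∑ m, ladderGap φ K w i m = 0 := by
  simp only [ladderGap]
  rw [sum_comm]
  simp_rw [← mul_sum, sum_add_distrib, sum_ite_eq', mem_univ, if_true, div_mul_eq_mul_div]
  rw [sum_product_range_div_card (runnersUp_nonempty w i) K
    (fun k => (K.choose k : ℝ) * (φ (rung w i K (k + 1)) * (w i - rung w i K (k + 1))
      + φ (rung w i K k) * (secondScore w i - rung w i K k)) / 2 ^ K),
    ← sum_div, sum_choose_mul_ladderLevel, zero_div]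

lemma sum_perm_calibrationGap [Nontrivial ι] (w : ι → ℝ) (ℓ : ι) :
    ∑ σ : Perm ι, calibrationGap φ K (w ∘ σ) ℓ = 0 :=
  calc ∑ σ : Perm ι, calibrationGap φ K (w ∘ σ) ℓ
      = ∑ σ : Perm ι, ∑ i, (if IsStrictTop w i then ladderGap φ K w i (σ ℓ) else 0) :=
        sum_congr rfl fun σ _ => by
          simp_rw [calibrationGap, isStrictTop_comp, ladderGap_comp]
          exact Equiv.sum_comp σ fun i => if IsStrictTop w i then ladderGap φ K w i (σ ℓ) else 0
    _ = ∑ i, ∑ σ : Perm ι, (if IsStrictTop w i then ladderGap φ K w i (σ ℓ) else 0) := sum_comm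
    _ = 0 := sum_eq_zero fun i _ => by
        by_cases hi : IsStrictTop w i
        · simp only [hi, if_true]
          exact sum_perm_apply_eq_zero (sum_ladderGap w i) ℓ
        · simp [hi]

lemma signalKernel_nonneg (v : ι → ℝ) (K : ℕ) (r s : ι → ℝ) : 0 ≤ signalKernel v K r s := by
  unfold signalKernel
  split_ifs
  · rw [ladderKernel, Finsupp.finsetSum_apply]
    exact sum_nonneg fun t _ => by rw [Finsupp.single_apply]; split_ifs <;> positivity
  · rw [Finsupp.single_apply]; split_ifs <;> norm_num

lemma finsum_signalKernel [Nontrivial ι] (v : ι → ℝ) (K : ℕ) (r : ι → ℝ) :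
    ∑ᶠ s, signalKernel v K r s = 1 := by
  unfold signalKernel
  split_ifs with h
  · have hmass := finsum_sum_single_mul (runnersUp (v * r) h.choose ×ˢ range (K + 1))
      (fun t => ladderSignal v r K h.choose t.1 t.2)
      (fun t => (K.choose t.2 : ℝ) / 2 ^ K / #(runnersUp (v * r) h.choose)) fun _ => 1
    simp only [mul_one] at hmass
    rw [ladderKernel, hmass, sum_product_range_div_card (runnersUp_nonempty (v * r) h.choose) K
      fun k => (K.choose k : ℝ) / 2 ^ K, sum_choose_div_two_pow]
  · simpa using finsum_single_mul r 1 fun _ => (1 : ℝ)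

lemma mem_Icc_of_signalKernel_ne_zero [Nontrivial ι] (hr : ∀ m, r m ∈ Set.Icc 0 1)
    (hw : 0 ≤ v * r) (hcap : ∀ m m', (v * r) m' ≤ v m) {s : ι → ℝ}
    (hs : signalKernel v K r s ≠ 0) (m : ι) : s m ∈ Set.Icc 0 1 := by
  unfold signalKernel at hs
  split_ifs at hs with h
  · rw [ladderKernel, Finsupp.finsetSum_apply] at hs
    obtain ⟨t, ht, hne⟩ := exists_ne_zero_of_sum_ne_zero hs
    rw [(Finsupp.single_apply_ne_zero.1 hne).1]
    exact ladderSignal_mem_Icc hr hw hcap h.choose_spec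
      (Nat.lt_succ_iff.1 (mem_range.1 (mem_product.1 ht).2)) m
  · rw [(Finsupp.single_apply_ne_zero.1 hs).1]
    exact hr m

lemma finsum_signalKernel_calibration [Nontrivial ι] (hw : 0 ≤ v * r)
    (hcap : ∀ m m', (v * r) m' ≤ v m) (ℓ : ι) (c : ℝ) :
    ∑ᶠ s, signalKernel v K r s * (if s ℓ = c then r ℓ - c else 0)
      = calibrationGap (scoreTest (v ℓ) c) K (v * r) ℓ := by
  by_cases h : ∃ i, IsStrictTop (v * r) i
  · have hi := h.choose_spec
    rw [signalKernel, dif_pos h, ladderKernel, finsum_sum_single_mul, calibrationGap,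
      sum_eq_single h.choose (fun i _ hne => if_neg fun hi' => hne (hi'.unique hi)) (by simp),
      if_pos hi, ladderGap]
    exact sum_congr rfl fun t ht => by
      rw [ladderSignal_calibration hw hcap hi (mem_product.1 ht).1]
  · rw [signalKernel, dif_neg h, finsum_single_mul, calibrationGap]
    simp only [not_exists.1 h, if_false, sum_const_zero, one_mul]
    split_ifs with hc
    · rw [hc, sub_self]
    · rfl

end Kernel

lemma le_finsum_signalKernel_clickRevenue {n : ℕ} [Nontrivial (Fin n)] {v r : Fin n → ℝ}
    (K : ℕ) (hw : 0 ≤ v * r) (hcap : ∀ m m', (v * r) m' ≤ v m) :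
    (1 - 2 / (K + 1)) * ⨆ m, v m * r m ≤ ∑ᶠ s, signalKernel v K r s * clickRevenue v r s := by
  by_cases h : ∃ i, IsStrictTop (v * r) i
  · have hi := h.choose_spec
    set i := h.choose
    set J := runnersUp (v * r) i
    rw [signalKernel, dif_pos h, ladderKernel, finsum_sum_single_mul]
    calc (1 - 2 / (K + 1)) * ⨆ m, v m * r m
        ≤ (v * r) i * ∑ k ∈ range (K + 1), (K.choose k : ℝ) / 2 ^ K * (k / (k + 1)) := by
          rw [mul_comm, show ⨆ m, v m * r m = (v * r) i from hi.iSup_eq]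
          exact mul_le_mul_of_nonneg_left (one_sub_two_div_le_sum_choose_mul K) (hw i)
      _ = ∑ t ∈ J ×ˢ range (K + 1),
            (K.choose t.2 : ℝ) / 2 ^ K / #J * ((v * r) i * (t.2 / (t.2 + 1))) := by
          rw [mul_sum, ← sum_product_range_div_card (runnersUp_nonempty (v * r) i) K]
          exact sum_congr rfl fun t _ => by ring
      _ ≤ _ := sum_le_sum fun t ht => by
          rw [clickRevenue_ladderSignal hw hcap hi (mem_product.1 ht).1, mul_div_assoc]
          exact mul_le_mul_of_nonneg_left (mul_le_mul_of_nonneg_left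
            (div_le_ladderLevel_div (secondScore_nonneg hw i) hi.secondScore_lt) (hw i))
            (by positivity)
  · rw [signalKernel, dif_neg h, finsum_single_mul, one_mul,
      clickRevenue_self_of_forall_not_isStrictTop (not_exists.1 h)]
    have hM : 0 ≤ ⨆ m, v m * r m := Real.iSup_nonneg hw
    have hK : 0 ≤ 2 / ((K : ℝ) + 1) := by positivity
    nlinarith

section InfoStructure

variable {n : ℕ} {v : Fin n → ℝ} {g : (Fin n → ℝ) → ℝ}

lemma score_nonneg (hg : IsPriorN g) (hv : 0 ≤ v) {r : Fin n → ℝ} (hr : g r ≠ 0) : 0 ≤ v * r :=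
  fun m => mul_nonneg (hv m) (hg.2.2.1 r hr m).1

lemma score_le_value (hg : IsPriorN g) (hv : 0 ≤ v) (hsym : IsExchangeable g (v * ·))
    {r : Fin n → ℝ} (hr : g r ≠ 0) (m m' : Fin n) : (v * r) m' ≤ v m := by
  simpa using hsym.comp_perm hg.2.1 hg.1 (P := fun w => ∀ m, w m ≤ v m)
    (fun r hr m => mul_le_of_le_one_right (hv m) (hg.2.2.1 r hr m).2) (swap m m') hr m

variable [Nontrivial (Fin n)]
  (hg : IsPriorN g) (hv : 0 ≤ v) (hcap : ∀ r, g r ≠ 0 → ∀ m m', (v * r) m' ≤ v m) (K : ℕ)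
include hg hv hcap

lemma isInfoN_signalKernel : IsInfoN g fun p => g p.1 * signalKernel v K p.1 p.2 := by
  refine ⟨finite_support_compProd hg.1 _, fun p => mul_nonneg (hg.2.1 _) (signalKernel_nonneg ..),
    fun p hp => ?_, fun r => ?_⟩
  · have hr := left_ne_zero_of_mul hp
    exact mem_Icc_of_signalKernel_ne_zero (hg.2.2.1 p.1 hr) (score_nonneg hg hv hr) (hcap _ hr)
      (right_ne_zero_of_mul hp)
  · show ∑ᶠ s, g r * signalKernel v K r s = g r
    rw [← mul_finsum, finsum_signalKernel, mul_one]

lemma calibratedN_signalKernel (hsym : IsExchangeable g (v * ·)) :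
    CalibratedN fun p => g p.1 * signalKernel v K p.1 p.2 := by
  intro ℓ c _ _
  simp_rw [← mul_ite_zero]
  rw [finsum_compProd_mul hg.1]
  calc ∑ᶠ r, g r * ∑ᶠ s, signalKernel v K r s * (if s ℓ = c then r ℓ - c else 0)
      = ∑ᶠ r, g r * calibrationGap (scoreTest (v ℓ) c) K (v * r) ℓ := finsum_congr fun r => by
        by_cases hr : g r = 0
        · simp [hr]
        · rw [finsum_signalKernel_calibration (score_nonneg hg hv hr) (hcap r hr)]
    _ = 0 := finsum_mul_eq_zero_of_sum_perm hg.1 hsym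
        (Φ := fun w => calibrationGap (scoreTest (v ℓ) c) K w ℓ)
        fun w => sum_perm_calibrationGap w ℓ

lemma le_RevN_signalKernel :
    (1 - 2 / (K + 1)) * ∑ᶠ r, g r * ⨆ i, v i * r i
      ≤ RevN v fun p => g p.1 * signalKernel v K p.1 p.2 := by
  show _ ≤ ∑ᶠ p : (Fin n → ℝ) × (Fin n → ℝ),
    g p.1 * signalKernel v K p.1 p.2 * clickRevenue v p.1 p.2
  rw [finsum_compProd_mul hg.1, mul_finsum]
  refine finsum_le_finsum' (hg.1.subset fun r hr => left_ne_zero_of_mul (right_ne_zero_of_mul hr))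
    (hg.1.subset (support_mul_subset_left _ _)) fun r => ?_
  by_cases hr : g r = 0
  · simp [hr]
  rw [mul_left_comm]
  exact mul_le_mul_of_nonneg_left
    (le_finsum_signalKernel_clickRevenue K (score_nonneg hg hv hr) (hcap r hr)) (hg.2.1 r)

end InfoStructure

end ClickAuction

open ClickAuction in
/-- full surplus extraction in symmetric environments: if the
distribution of the value-weighted CTR vector is exchangeable, calibrated
information structures can extract revenue arbitrarily close to the full social
surplus. -/
theorem full_surplus_extraction_symmetric
    (n : ℕ) (hn : 2 ≤ n) (v : Fin n → ℝ) (hv : ∀ i, 0 ≤ v i)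
    (g : (Fin n → ℝ) → ℝ) (hg : IsPriorN g)
    (hsym : ∀ σ : Equiv.Perm (Fin n), ∀ w : Fin n → ℝ,
      (∑ᶠ r : Fin n → ℝ, if (fun i => v i * r i) = w then g r else 0)
        = ∑ᶠ r : Fin n → ℝ, if (fun i => v i * r i) = (fun i => w (σ i)) then g r else 0)
    (ε : ℝ) (hε : 0 < ε) :
    ∃ x : (Fin n → ℝ) × (Fin n → ℝ) → ℝ,
      IsInfoN g x ∧ CalibratedN x ∧
      (∑ᶠ r : Fin n → ℝ, g r * (⨆ i, v i * r i)) - ε ≤ RevN v x := by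
  have : Nontrivial (Fin n) := Fin.nontrivial_iff_two_le.2 hn
  have hcap := fun r (hr : g r ≠ 0) => score_le_value hg hv hsym hr
  set S := ∑ᶠ r : Fin n → ℝ, g r * (⨆ i, v i * r i)
  have hS : 0 ≤ S := finsum_nonneg fun r => by
    by_cases hr : g r = 0
    · simp [hr]
    · exact mul_nonneg (hg.2.1 r) (Real.iSup_nonneg (score_nonneg hg hv hr))
  set K := ⌈2 * S / ε⌉₊
  have hK : 2 / (K + 1 : ℝ) * S ≤ ε := by
    have := Nat.le_ceil (2 * S / ε)
    rw [div_le_iff₀ hε] at this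
    rw [div_mul_eq_mul_div, div_le_iff₀ (by positivity)]
    nlinarith
  refine ⟨_, isInfoN_signalKernel hg hv hcap K, calibratedN_signalKernel hg hv hcap K hsym,
    le_trans ?_ (le_RevN_signalKernel hg hv hcap K)⟩
  linarith [show (1 - 2 / (K + 1 : ℝ)) * S = S - 2 / (K + 1) * S by ring]
end
end

section
/- (Bundling the winner and unbundling the loser attains the bound.) Let v1 = v2 = 1 and let g be supported on two CTR pairs, g((r1,r2)) = p and g((r'1,r'2)) = 1−p, with p ∈ (0,1), r1, r2, r'1, r'2 ∈ (0,1], r1 ≥ r'1, r1 ≥ r2, r'1 ≥ r'2, r2 ≥ r'2, and r2 < μ1 where μ1 = p·r1 + (1−p)·r'1. Then the function x defined by x((r1,r2),(μ1,r2)) = p, x((r'1,r'2),(μ1,r'2)) = 1−p, and x = 0 otherwise, is a calibrated information structure for g, and Rev(x) = (p·r1·r2 + (1−p)·r'1·r'2)/μ1. -/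
open scoped Classical

noncomputable section

lemma finsum_pair_of {α : Type*} (F : α → ℝ) (a b : α) (hab : a ≠ b)
    (h : ∀ q, q ≠ a → q ≠ b → F q = 0) : ∑ᶠ q, F q = F a + F b := by
  classical
  rw [finsum_eq_finset_sum_of_support_subset F (s := ({a, b} : Finset α))]
  · rw [Finset.sum_pair hab]
  · intro q hq
    by_contra hq'
    simp only [Finset.coe_insert, Finset.coe_singleton, Set.mem_insert_iff,
      Set.mem_singleton_iff, not_or] at hq'
    exact (Function.mem_support.mp hq) (h q hq'.1 hq'.2)

/-- bundling the winner and unbundling the loser is a calibrated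
information structure attaining revenue (p·r1·r2 + (1−p)·r1'·r2')/μ1. -/
theorem bundling_winner_unbundling_loser_attains_bound
    (p r1 r2 r1' r2' : ℝ) (hp0 : 0 < p) (hp1 : p < 1)
    (hr1 : 0 < r1) (hr1'' : r1 ≤ 1) (hr2 : 0 < r2) (hr2'' : r2 ≤ 1)
    (hr1'0 : 0 < r1') (hr1'1 : r1' ≤ 1) (hr2'0 : 0 < r2') (hr2'1 : r2' ≤ 1)
    (h11' : r1' ≤ r1) (h12 : r2 ≤ r1) (h1'2' : r2' ≤ r1') (h22' : r2' ≤ r2)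
    (hweak : r2 < p * r1 + (1 - p) * r1')
    (hne : ((r1, r2) : ℝ × ℝ) ≠ (r1', r2'))
    (g : ℝ × ℝ → ℝ)
    (hgdef : ∀ r, g r = if r = (r1, r2) then p else if r = (r1', r2') then 1 - p else 0)
    (x : (ℝ × ℝ) × (ℝ × ℝ) → ℝ)
    (hxdef : ∀ q, x q =
      if q = ((r1, r2), (p * r1 + (1 - p) * r1', r2)) then p
      else if q = ((r1', r2'), (p * r1 + (1 - p) * r1', r2')) then 1 - p else 0) :
    IsInfoStructure g x ∧ Calibrated x ∧
      Rev 1 1 x = (p * r1 * r2 + (1 - p) * r1' * r2') / (p * r1 + (1 - p) * r1') := by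
  have hp1' : 0 < 1 - p := by linarith
  have hμpos : 0 < p * r1 + (1 - p) * r1' :=
    add_pos (mul_pos hp0 hr1) (mul_pos hp1' hr1'0)
  set μ := p * r1 + (1 - p) * r1' with hμ
  have hμ1 : μ ≤ 1 := by nlinarith
  set q1 : (ℝ × ℝ) × (ℝ × ℝ) := ((r1, r2), (μ, r2)) with hq1def
  set q2 : (ℝ × ℝ) × (ℝ × ℝ) := ((r1', r2'), (μ, r2')) with hq2def
  have hq12 : q1 ≠ q2 := fun h => hne (congrArg Prod.fst h)
  have hx0 : ∀ q, q ≠ q1 → q ≠ q2 → x q = 0 := by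
    intro q h1 h2; rw [hxdef]; simp [h1, h2]
  have hxq1 : x q1 = p := by rw [hxdef]; simp
  have hxq2 : x q2 = 1 - p := by rw [hxdef]; simp [hq12.symm]
  refine ⟨⟨?_, ?_, ?_, ?_⟩, ?_, ?_⟩
  · -- finite support
    refine Set.Finite.subset ((Set.finite_singleton q2).insert q1) ?_
    intro q hq
    by_contra hq'
    simp only [Set.mem_insert_iff, Set.mem_singleton_iff, not_or] at hq'
    exact hq (hx0 q hq'.1 hq'.2)
  · -- nonneg
    intro q; rw [hxdef]; split_ifs <;> linarith
  · -- signals in unit square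
    intro q hq
    rcases eq_or_ne q q1 with h | h
    · subst h
      exact ⟨le_of_lt hμpos, hμ1, le_of_lt hr2, hr2''⟩
    rcases eq_or_ne q q2 with h' | h'
    · subst h'
      exact ⟨le_of_lt hμpos, hμ1, le_of_lt hr2'0, hr2'1⟩
    · exact absurd (hx0 q h h') hq
  · -- marginal
    intro r
    rcases eq_or_ne r (r1, r2) with h | h
    · subst h
      rw [finsum_eq_single _ ((μ, r2) : ℝ × ℝ)]
      · rw [hxq1, hgdef]; simp
      · intro s hs
        exact hx0 _ (fun h => hs (congrArg Prod.snd h))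
          (fun h => hne (congrArg Prod.fst h))
    rcases eq_or_ne r (r1', r2') with h' | h'
    · subst h'
      rw [finsum_eq_single _ ((μ, r2') : ℝ × ℝ)]
      · rw [hxq2, hgdef]; simp [hne.symm]
      · intro s hs
        exact hx0 _ (fun h => hne (congrArg Prod.fst h).symm)
          (fun h => hs (congrArg Prod.snd h))
    · rw [finsum_eq_zero_of_forall_eq_zero, hgdef]
      · simp [h, h']
      · intro s
        exact hx0 _ (fun hq => h (congrArg Prod.fst hq))
          (fun hq => h' (congrArg Prod.fst hq))
  · -- calibrated
    intro c _ _
    have e11 : (q1.2.1 : ℝ) = μ := rfl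
    have e21 : (q2.2.1 : ℝ) = μ := rfl
    have e12 : (q1.2.2 : ℝ) = r2 := rfl
    have e22 : (q2.2.2 : ℝ) = r2' := rfl
    have f11 : (q1.1.1 : ℝ) = r1 := rfl
    have f21 : (q2.1.1 : ℝ) = r1' := rfl
    have f12 : (q1.1.2 : ℝ) = r2 := rfl
    have f22 : (q2.1.2 : ℝ) = r2' := rfl
    constructor
    · rw [finsum_pair_of _ q1 q2 hq12]
      · simp only [e11, e21, f11, f21, hxq1, hxq2]
        by_cases h : μ = c
        · rw [if_pos h, if_pos h]
          have hc : c = p * r1 + (1 - p) * r1' := by rw [← h]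
          rw [hc]; ring
        · rw [if_neg h, if_neg h, add_zero]
      · intro q h1 h2; rw [hx0 q h1 h2]; split_ifs <;> ring
    · rw [finsum_pair_of _ q1 q2 hq12]
      · simp only [e12, e22, f12, f22]
        have t1 : (if r2 = c then x q1 * (r2 - c) else 0) = 0 := by
          by_cases h : r2 = c
          · rw [if_pos h, h]; ring
          · rw [if_neg h]
        have t2 : (if r2' = c then x q2 * (r2' - c) else 0) = 0 := by
          by_cases h : r2' = c
          · rw [if_pos h, h]; ring
          · rw [if_neg h]
        rw [t1, t2, add_zero]
      · intro q h1 h2; rw [hx0 q h1 h2]; split_ifs <;> ring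
  · -- revenue
    rw [Rev, finsum_pair_of _ q1 q2 hq12]
    · have hpay1 : pay 1 1 q1.1 q1.2 = r1 * (r2 / μ) := by
        show pay 1 1 (r1, r2) (μ, r2) = _
        rw [pay]
        simp only [one_mul]
        rw [if_pos hweak]
      have hpay2 : pay 1 1 q2.1 q2.2 = r1' * (r2' / μ) := by
        show pay 1 1 (r1', r2') (μ, r2') = _
        rw [pay]
        simp only [one_mul]
        rw [if_pos (by linarith : r2' < μ)]
      rw [hxq1, hxq2, hpay1, hpay2, hμ]
      field_simp
    · intro q h1 h2; rw [hx0 q h1 h2]; ring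
end
end
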